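/- arXiv:1109.0232 — 4 statements merged into one kernel-verified Lean document; each statement's English description precedes it below -/
import Mathlib

section
/- Let N ∈ ℕ, Q ≥ 1, and let k(1),…,k(N) be complex numbers. Let ρ(a, q) ≥ 0 (depending only on a mod q) satisfy ρ(0,1) = 1 and ∑_{a mod rs, a ≡ b mod r} ρ(a, rs) = ρ(b, r) for all b, r, s. Let ω(1),…,ω(N) be complex numbers, S := ∑_{n≤N} ω(n), and suppose there are E ≥ 1 and W ≥ 0 such that |∑_{n≤N, n≡a mod q} k(n) − ρ(a,q)·S| ≤ E for all q ≤ Q and all residue classes a mod q, and |∑_{n≤N, n≡a mod q} ω(n) − S/q| ≤ W for all q ≤ Q² and all a mod q. Define k̂(n) := ω(n)·∑_{q≤Q} ∑_{a mod q, gcd(a,q)=1} e_q(−an)·∑_{c mod q} ρ(c,q)·e_q(ac). Then for every h ≤ Q and every residue class b mod h, |∑_{n≤N, n≡b mod h} (k(n) − k̂(n))| ≤ W·Q³ + E. -/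
/-!
Split the class `n ≡ b (mod h)` further into the classes modulo `hq`. On each of them `ω` sums to
`S / (hq)` up to `W`, and `e_q(-an)` is constant, so replacing these sums by `S / (hq)` costs at
most `W·Q³` in `∑ k̂`. By orthogonality of `e_q` the remaining main term only sees `q ∣ h`, where
it is `S / h · ∑_{q ∣ h} ∑_{(a,q)=1} ∑_c ρ(c,q) e_q(a(c - b))`. The compatibility of `ρ` lifts
`ρ(·,q)` to `ρ(·,h)`, and the Ramanujan-type identity `∑_{q ∣ h} ∑_{(a,q)=1} e_q(am) = h·[h ∣ m]`
(a reindexing of `∑_{m' mod h} e_h(m'm)`) collapses the sum to `ρ(b,h)·S`, which is also the main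
term of `∑ k` up to `E`.
-/

/-- The additive character `e_q(m) = e^{2πim/q}`. -/
noncomputable def eChar (q : ℕ) (m : ℤ) : ℂ :=
  Complex.exp (2 * Real.pi * Complex.I * (m : ℂ) / (q : ℂ))

open Finset

lemma eChar_eq_zpow (q : ℕ) (m : ℤ) :
    eChar q m = Complex.exp (2 * Real.pi * Complex.I / q) ^ m := by
  rw [eChar, ← Complex.exp_int_mul]
  ring_nf

lemma eChar_add (q : ℕ) (m m' : ℤ) : eChar q (m + m') = eChar q m * eChar q m' := by
  simp only [eChar_eq_zpow, zpow_add₀ (Complex.exp_ne_zero _)]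

lemma eChar_mul_natCast (q : ℕ) (m : ℤ) (u : ℕ) : eChar q (m * u) = eChar q m ^ u := by
  rw [eChar_eq_zpow, eChar_eq_zpow, zpow_mul, zpow_natCast]

lemma norm_eChar (q : ℕ) (m : ℤ) : ‖eChar q m‖ = 1 := by
  rw [eChar, Complex.norm_exp]
  simp

lemma eChar_eq_one_iff {q : ℕ} (hq : q ≠ 0) (m : ℤ) : eChar q m = 1 ↔ (q : ℤ) ∣ m := by
  rw [eChar_eq_zpow]
  exact (Complex.isPrimitiveRoot_exp q hq).zpow_eq_one_iff_dvd m

lemma eChar_eq_of_dvd_sub {q : ℕ} (hq : q ≠ 0) {m m' : ℤ} (h : (q : ℤ) ∣ m - m') :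
    eChar q m = eChar q m' := by
  rw [← sub_add_cancel m m', eChar_add, (eChar_eq_one_iff hq _).2 h, one_mul]

lemma eChar_neg_mul_eq_of_modEq {q n n' : ℕ} (hq : q ≠ 0) (a : ℕ) (h : n ≡ n' [MOD q]) :
    eChar q (-(a * n : ℤ)) = eChar q (-(a * n' : ℤ)) := by
  refine eChar_eq_of_dvd_sub hq ?_
  rw [show -((a : ℤ) * n) - -((a : ℤ) * n') = a * ((n' : ℤ) - n) by ring]
  exact (Nat.modEq_iff_dvd.1 h).mul_left a

lemma sum_range_eChar_mul {q : ℕ} (hq : q ≠ 0) (m : ℤ) :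
    ∑ u ∈ range q, eChar q (m * u) = if (q : ℤ) ∣ m then (q : ℂ) else 0 := by
  simp only [eChar_mul_natCast]
  split_ifs with hm
  · simp [(eChar_eq_one_iff hq m).2 hm]
  · have hpow : eChar q m ^ q = 1 := by
      rw [← eChar_mul_natCast, eChar_eq_one_iff hq]
      exact dvd_mul_left _ _
    rw [geom_sum_eq (mt (eChar_eq_one_iff hq m).1 hm), hpow, sub_self, zero_div]

lemma eChar_mul_mul {s : ℕ} (hs : s ≠ 0) (q : ℕ) (x : ℤ) :
    eChar (q * s) (s * x) = eChar q x := by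
  rw [eChar, eChar, Nat.cast_mul, Int.cast_mul, Int.cast_natCast,
    show 2 * Real.pi * Complex.I * (s * x) = s * (2 * Real.pi * Complex.I * x) by ring,
    mul_comm (q : ℂ), mul_div_mul_left _ _ (Nat.cast_ne_zero.2 hs)]

lemma sum_divisors_sum_coprime_eq_sum_range {M : Type*} [AddCommMonoid M] {h : ℕ} (hh : h ≠ 0)
    (f : ℕ → M) :
    ∑ q ∈ h.divisors, ∑ a ∈ (range q).filter (fun a => a.gcd q = 1), f (a * (h / q)) =
      ∑ b ∈ range h, f b := by
  rw [sum_sigma']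
  refine sum_nbij' (fun p => p.2 * (h / p.1)) (fun b => ⟨h / b.gcd h, b / b.gcd h⟩)
    ?_ ?_ ?_ ?_ (fun _ _ => rfl)
  · rintro ⟨q, a⟩ hp
    simp only [mem_sigma, Nat.mem_divisors, mem_filter, mem_range] at hp ⊢
    obtain ⟨⟨hqh, -⟩, ha, -⟩ := hp
    calc a * (h / q) < q * (h / q) :=
          Nat.mul_lt_mul_of_pos_right ha (Nat.div_pos (Nat.le_of_dvd (by omega) hqh) (by omega))
      _ = h := Nat.mul_div_cancel' hqh
  · intro b hb
    simp only [mem_range] at hb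
    simp only [mem_sigma, Nat.mem_divisors, mem_filter, mem_range]
    have hg : 0 < b.gcd h := Nat.gcd_pos_of_pos_right b (by omega)
    exact ⟨⟨Nat.div_dvd_of_dvd (Nat.gcd_dvd_right b h), hh⟩,
      Nat.div_lt_div_of_lt_of_dvd (Nat.gcd_dvd_right b h) hb, Nat.coprime_div_gcd_div_gcd hg⟩
  · rintro ⟨q, a⟩ hp
    simp only [mem_sigma, Nat.mem_divisors, mem_filter, mem_range] at hp
    obtain ⟨⟨hqh, -⟩, ha, hcop⟩ := hp
    have hgcd : (a * (h / q)).gcd h = h / q := by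
      nth_rewrite 2 [← Nat.mul_div_cancel' hqh]
      rw [Nat.gcd_mul_right, hcop, one_mul]
    have hpos : 0 < h / q := Nat.div_pos (Nat.le_of_dvd (by omega) hqh) (by omega)
    simp only [hgcd, Nat.div_div_self hqh hh, Nat.mul_div_cancel _ hpos]
  · intro b _
    simp only
    rw [Nat.div_div_self (Nat.gcd_dvd_right b h) hh, Nat.div_mul_cancel (Nat.gcd_dvd_left b h)]

lemma sum_divisors_sum_coprime_eChar {h : ℕ} (hh : h ≠ 0) (m : ℤ) :
    ∑ q ∈ h.divisors, ∑ a ∈ (range q).filter (fun a => a.gcd q = 1), eChar q (a * m) =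
      if (h : ℤ) ∣ m then (h : ℂ) else 0 := by
  rw [← sum_range_eChar_mul hh, ← sum_divisors_sum_coprime_eq_sum_range hh]
  refine sum_congr rfl fun q hq => sum_congr rfl fun a _ => ?_
  obtain ⟨s, rfl⟩ := Nat.dvd_of_mem_divisors hq
  have hs : s ≠ 0 := right_ne_zero_of_mul hh
  rw [Nat.mul_div_cancel_left _ (Nat.pos_of_ne_zero (left_ne_zero_of_mul hh)),
    ← eChar_mul_mul hs]
  congr 1
  push_cast
  ring

def IsCompatibleDensity (ρ : ℕ → ℕ → ℝ) : Prop :=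
  ∀ b r s : ℕ, 0 < r → 0 < s →
    ∑ a ∈ Finset.range (r * s), (if a % r = b % r then ρ a (r * s) else 0) = ρ b r

noncomputable def densityFourier (ρ : ℕ → ℕ → ℝ) (q a : ℕ) : ℂ :=
  ∑ c ∈ range q, (ρ c q : ℂ) * eChar q (a * c : ℤ)

section Density

variable {ρ : ℕ → ℕ → ℝ}

lemma IsCompatibleDensity.sum_range_eq_one (hρ : IsCompatibleDensity ρ) (hρone : ρ 0 1 = 1)
    {q : ℕ} (hq : 0 < q) : ∑ c ∈ range q, ρ c q = 1 := by
  simpa [Nat.mod_one, hρone] using hρ 0 1 q one_pos hq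

lemma IsCompatibleDensity.sum_range_eq_of_dvd (hρ : IsCompatibleDensity ρ) {q h : ℕ}
    (hq : 0 < q) (hh : h ≠ 0) (hqh : q ∣ h) (f : ℕ → ℂ) (hf : ∀ d, f d = f (d % q)) :
    ∑ c ∈ range q, (ρ c q : ℂ) * f c = ∑ d ∈ range h, (ρ d h : ℂ) * f d := by
  obtain ⟨s, rfl⟩ := hqh
  rw [← sum_fiberwise_of_maps_to (s := range (q * s)) (g := (· % q)) (t := range q)
    (fun d _ => mem_range.2 (Nat.mod_lt d hq))]
  refine sum_congr rfl fun c hc => ?_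
  have hcq : c % q = c := Nat.mod_eq_of_lt (mem_range.1 hc)
  rw [← hρ c q s hq (Nat.pos_of_ne_zero (right_ne_zero_of_mul hh)), ← sum_filter, hcq,
    Complex.ofReal_sum, sum_mul]
  refine sum_congr rfl fun d hd => ?_
  rw [hf d, (mem_filter.1 hd).2]

lemma norm_densityFourier_le_one (hρnn : ∀ a q, 0 ≤ ρ a q) (hρ : IsCompatibleDensity ρ)
    (hρone : ρ 0 1 = 1) {q : ℕ} (hq : 0 < q) (a : ℕ) : ‖densityFourier ρ q a‖ ≤ 1 := by
  calc ‖densityFourier ρ q a‖ ≤ ∑ c ∈ range q, ‖(ρ c q : ℂ) * eChar q (a * c : ℤ)‖ :=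
        norm_sum_le _ _
    _ = ∑ c ∈ range q, ρ c q := by
        refine sum_congr rfl fun c _ => ?_
        rw [norm_mul, norm_eChar, mul_one, Complex.norm_real, Real.norm_of_nonneg (hρnn c q)]
    _ = 1 := hρ.sum_range_eq_one hρone hq

lemma IsCompatibleDensity.sum_divisors_sum_coprime_densityFourier (hρ : IsCompatibleDensity ρ)
    {h : ℕ} (hh : 0 < h) (b : ℕ) :
    ∑ q ∈ h.divisors, ∑ a ∈ (range q).filter (fun a => a.gcd q = 1),
      densityFourier ρ q a * eChar q (-(a * b : ℤ)) = h * ρ b h := by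
  calc _ = ∑ q ∈ h.divisors, ∑ a ∈ (range q).filter (fun a => a.gcd q = 1),
        ∑ d ∈ range h, (ρ d h : ℂ) * eChar q (a * ((d : ℤ) - b)) := by
        refine sum_congr rfl fun q hq => sum_congr rfl fun a _ => ?_
        have hq0 : 0 < q := Nat.pos_of_mem_divisors hq
        rw [← hρ.sum_range_eq_of_dvd hq0 hh.ne' (Nat.dvd_of_mem_divisors hq), densityFourier,
          sum_mul]
        · refine sum_congr rfl fun c _ => ?_
          rw [mul_assoc, ← eChar_add]
          ring_nf
        · intro d
          refine eChar_eq_of_dvd_sub hq0.ne' ?_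
          rw [show (a : ℤ) * (d - b) - a * ((d % q : ℕ) - b) = a * (d - (d % q : ℕ)) by ring]
          exact (Nat.modEq_iff_dvd.1 (Nat.mod_modEq d q)).mul_left a
    _ = ∑ d ∈ range h, (ρ d h : ℂ) * ∑ q ∈ h.divisors,
          ∑ a ∈ (range q).filter (fun a => a.gcd q = 1), eChar q (a * ((d : ℤ) - b)) := by
        simp only [mul_sum]
        rw [sum_comm]
        refine sum_congr rfl fun q _ => sum_comm
    _ = ∑ d ∈ range (h * 1), if d % h = b % h then (h : ℂ) * ρ d (h * 1) else 0 := by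
        rw [mul_one]
        refine sum_congr rfl fun d _ => ?_
        have hdvd : (h : ℤ) ∣ (d : ℤ) - b ↔ d % h = b % h :=
          Nat.modEq_iff_dvd.symm.trans ⟨Eq.symm, Eq.symm⟩
        rw [sum_divisors_sum_coprime_eChar hh.ne']
        simp only [hdvd, mul_ite, mul_zero, mul_comm]
    _ = h * ρ b h := by
        simp_rw [← mul_ite_zero, ← mul_sum, ← Complex.ofReal_zero, ← apply_ite,
          ← Complex.ofReal_sum]
        rw [hρ b h 1 hh one_pos]

lemma IsCompatibleDensity.sum_Icc_sum_coprime_densityFourier_mul_ite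
    (hρ : IsCompatibleDensity ρ) {h Q : ℕ} (hh : 0 < h) (hhQ : h ≤ Q) (b : ℕ) (S : ℂ) :
    ∑ q ∈ Icc 1 Q, ∑ a ∈ (range q).filter (fun a => a.gcd q = 1),
      densityFourier ρ q a * (if q ∣ h then eChar q (-(a * b : ℤ)) * (S / h) else 0) =
        ρ b h * S := by
  rw [← sum_subset (fun q hq => mem_Icc.2 ⟨Nat.pos_of_mem_divisors hq,
      (Nat.divisor_le hq).trans hhQ⟩)
    (fun q _ hq => sum_eq_zero fun a _ => by
      rw [if_neg fun hqh => hq (Nat.mem_divisors.2 ⟨hqh, hh.ne'⟩), mul_zero])]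
  have hh' : (h : ℂ) ≠ 0 := Nat.cast_ne_zero.2 hh.ne'
  calc _ = (∑ q ∈ h.divisors, ∑ a ∈ (range q).filter (fun a => a.gcd q = 1),
        densityFourier ρ q a * eChar q (-(a * b : ℤ))) * (S / h) := by
        simp only [sum_mul, mul_assoc]
        refine sum_congr rfl fun q hq => sum_congr rfl fun a _ => ?_
        rw [if_pos (Nat.dvd_of_mem_divisors hq)]
    _ = ρ b h * S := by
        rw [hρ.sum_divisors_sum_coprime_densityFourier hh]
        field_simp

end Density

noncomputable def residueSum (f : ℕ → ℂ) (N m t : ℕ) : ℂ :=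
  ∑ n ∈ (Finset.Icc 1 N).filter (fun n => n % m = t % m), f n

lemma Nat.mod_mul_eq_add_mul_iff {h q r u n : ℕ} (hr : r < h) (hu : u < q) :
    n % (h * q) = r + h * u ↔ n % h = r ∧ n / h % q = u := by
  have hdecomp : n % (h * q) = n % h + h * (n / h % q) := by
    rw [← Nat.mod_mul_right_mod n h q, ← Nat.mod_mul_right_div_self n h q, Nat.mod_add_div]
  constructor
  · intro hn
    have hh : 0 < h := by omega
    rw [← Nat.mod_mul_right_mod n h q, ← Nat.mod_mul_right_div_self n h q, hn,
      Nat.add_mul_mod_self_left, Nat.mod_eq_of_lt hr, Nat.add_mul_div_left _ _ hh,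
      Nat.div_eq_of_lt hr, zero_add]
    exact ⟨rfl, rfl⟩
  · rintro ⟨rfl, rfl⟩
    exact hdecomp

lemma sum_filter_mod_eq_sum_range_sum_filter_mod_mul {M : Type*} [AddCommMonoid M]
    (s : Finset ℕ) {h q r : ℕ} (hr : r < h) (hq : 0 < q) (g : ℕ → M) :
    ∑ n ∈ s.filter (fun n => n % h = r), g n =
      ∑ u ∈ range q, ∑ n ∈ s.filter (fun n => n % (h * q) = r + h * u), g n := by
  rw [← sum_fiberwise_of_maps_to (g := fun n => n / h % q) (t := range q)
    (fun n _ => mem_range.2 (Nat.mod_lt _ hq))]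
  refine sum_congr rfl fun u hu => ?_
  rw [filter_filter]
  congr 1
  ext n
  simp only [mem_filter, Nat.mod_mul_eq_add_mul_iff hr (mem_range.1 hu)]

lemma sum_range_eChar_neg_mul_add_mul {q a : ℕ} (hq : q ≠ 0) (ha : a.gcd q = 1) (r h : ℕ) :
    ∑ u ∈ range q, eChar q (-(a * (r + h * u : ℕ) : ℤ)) =
      if q ∣ h then q * eChar q (-(a * r : ℤ)) else 0 := by
  have hsplit : ∀ u : ℕ, eChar q (-(a * (r + h * u : ℕ) : ℤ)) =
      eChar q (-(a * r : ℤ)) * eChar q (-(a * h : ℤ) * u) := fun u => by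
    rw [← eChar_add]
    exact congrArg (eChar q) (by push_cast; ring)
  have hcoprime : (q : ℤ) ∣ -(a * h : ℤ) ↔ q ∣ h := by
    rw [Int.dvd_neg, ← Nat.cast_mul, Int.natCast_dvd_natCast]
    exact ⟨(Nat.coprime_comm.1 ha).dvd_of_dvd_mul_left, (Dvd.dvd.mul_left · a)⟩
  simp only [hsplit, ← mul_sum]
  rw [sum_range_eChar_mul hq]
  simp only [hcoprime, mul_ite, mul_zero, mul_comm]

lemma norm_sum_filter_mul_eChar_sub_le (ω : ℕ → ℂ) (S : ℂ) {W : ℝ} (N : ℕ) {h q a : ℕ}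
    (hh : 0 < h) (hq : 0 < q) (ha : a.gcd q = 1)
    (hW : ∀ t, ‖residueSum ω N (h * q) t - S / (h * q : ℕ)‖ ≤ W) (b : ℕ) :
    ‖∑ n ∈ (Icc 1 N).filter (fun n => n % h = b % h), ω n * eChar q (-(a * n : ℤ)) -
        (if q ∣ h then eChar q (-(a * b : ℤ)) * (S / h) else 0)‖ ≤ q * W := by
  have hbq : q ∣ h → b % h ≡ b [MOD q] := (Nat.mod_modEq b h).of_dvd
  generalize hr : b % h = r at hbq
  have hrh : r < h := hr ▸ Nat.mod_lt b hh
  have hlt : ∀ u ∈ range q, r + h * u < h * q := fun u hu => by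
    have := mem_range.1 hu
    nlinarith
  set e : ℕ → ℂ := fun u => eChar q (-(a * (r + h * u : ℕ) : ℤ)) with he
  have hfiber : ∑ n ∈ (Icc 1 N).filter (fun n => n % h = r), ω n * eChar q (-(a * n : ℤ)) =
      ∑ u ∈ range q, e u * residueSum ω N (h * q) (r + h * u) := by
    rw [sum_filter_mod_eq_sum_range_sum_filter_mod_mul _ hrh hq]
    refine sum_congr rfl fun u hu => ?_
    rw [residueSum, Nat.mod_eq_of_lt (hlt u hu), mul_sum]
    refine sum_congr rfl fun n hn => ?_
    have hn : n ≡ r + h * u [MOD q] :=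
      Nat.ModEq.of_mul_left h ((mem_filter.1 hn).2.trans (Nat.mod_eq_of_lt (hlt u hu)).symm)
    rw [eChar_neg_mul_eq_of_modEq hq.ne' a hn, mul_comm]
  have hmain : (if q ∣ h then eChar q (-(a * b : ℤ)) * (S / h) else 0) =
      ∑ u ∈ range q, e u * (S / (h * q : ℕ)) := by
    rw [← sum_mul, sum_range_eChar_neg_mul_add_mul hq.ne' ha]
    split_ifs with hqh
    · have hq' : (q : ℂ) ≠ 0 := Nat.cast_ne_zero.2 hq.ne'
      rw [eChar_neg_mul_eq_of_modEq hq.ne' a (hbq hqh)]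
      push_cast
      field_simp
    · rw [zero_mul]
  rw [hfiber, hmain, ← sum_sub_distrib]
  calc _ ≤ ∑ u ∈ range q, ‖e u * (residueSum ω N (h * q) (r + h * u) - S / (h * q : ℕ))‖ := by
        simp only [mul_sub]
        exact norm_sum_le _ _
    _ ≤ ∑ _u ∈ range q, W := by
        refine sum_le_sum fun u _ => ?_
        rw [norm_mul, he, norm_eChar, one_mul]
        exact hW _
    _ = q * W := by rw [sum_const, card_range, nsmul_eq_mul]

lemma norm_residueSum_khat_sub_le (N Q : ℕ) (ω khat : ℕ → ℂ) (S : ℂ) {ρ : ℕ → ℕ → ℝ}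
    (hρnn : ∀ a q, 0 ≤ ρ a q) (hρ : IsCompatibleDensity ρ) (hρone : ρ 0 1 = 1)
    {W : ℝ} (hW0 : 0 ≤ W)
    (hW : ∀ q, 1 ≤ q → q ≤ Q ^ 2 → ∀ t, ‖residueSum ω N q t - S / (q : ℂ)‖ ≤ W)
    (hkhat : ∀ n : ℕ, khat n = ω n * ∑ q ∈ Icc 1 Q,
      ∑ a ∈ (range q).filter (fun a => a.gcd q = 1),
        eChar q (-(a * n : ℤ)) * densityFourier ρ q a)
    {h : ℕ} (hh : 0 < h) (hhQ : h ≤ Q) (b : ℕ) :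
    ‖residueSum khat N h b - ρ b h * S‖ ≤ W * Q ^ 3 := by
  set twisted : ℕ → ℕ → ℂ := fun q a =>
    ∑ n ∈ (Icc 1 N).filter (fun n => n % h = b % h), ω n * eChar q (-(a * n : ℤ))
  set main : ℕ → ℕ → ℂ := fun q a => if q ∣ h then eChar q (-(a * b : ℤ)) * (S / h) else 0
  have hswap : residueSum khat N h b = ∑ q ∈ Icc 1 Q,
      ∑ a ∈ (range q).filter (fun a => a.gcd q = 1), densityFourier ρ q a * twisted q a := by
    simp only [residueSum, twisted, hkhat, mul_sum]
    rw [sum_comm]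
    refine sum_congr rfl fun q _ => ?_
    rw [sum_comm]
    refine sum_congr rfl fun a _ => sum_congr rfl fun n _ => by ring
  have hterm : ∀ q ∈ Icc 1 Q, ∀ a ∈ (range q).filter (fun a => a.gcd q = 1),
      ‖densityFourier ρ q a * (twisted q a - main q a)‖ ≤ Q * W := by
    intro q hq a ha
    obtain ⟨hq1, hqQ⟩ := mem_Icc.1 hq
    calc ‖densityFourier ρ q a * (twisted q a - main q a)‖
        ≤ 1 * (q * W) := by
          rw [norm_mul]
          refine mul_le_mul (norm_densityFourier_le_one hρnn hρ hρone hq1 a) ?_ (norm_nonneg _)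
            zero_le_one
          exact norm_sum_filter_mul_eChar_sub_le ω S N hh hq1 (mem_filter.1 ha).2
            (hW (h * q) (Nat.mul_pos hh hq1) (by nlinarith)) b
      _ ≤ Q * W := by
          rw [one_mul]
          exact mul_le_mul_of_nonneg_right (by exact_mod_cast hqQ) hW0
  rw [hswap, ← hρ.sum_Icc_sum_coprime_densityFourier_mul_ite hh hhQ b S, ← sum_sub_distrib]
  calc _ ≤ ∑ q ∈ Icc 1 Q, ∑ a ∈ (range q).filter (fun a => a.gcd q = 1),
        ‖densityFourier ρ q a * (twisted q a - main q a)‖ := by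
        refine (norm_sum_le _ _).trans (sum_le_sum fun q _ => ?_)
        rw [← sum_sub_distrib]
        simp only [← mul_sub]
        exact norm_sum_le _ _
    _ ≤ ∑ q ∈ Icc 1 Q, ∑ a ∈ range Q, (Q * W : ℝ) := by
        refine sum_le_sum fun q hq => (sum_le_sum (hterm q hq)).trans ?_
        refine sum_le_sum_of_subset_of_nonneg ?_ fun _ _ _ => by positivity
        exact (filter_subset _ _).trans (range_subset_range.2 (mem_Icc.1 hq).2)
    _ = W * Q ^ 3 := by
        simp only [sum_const, card_range, Nat.card_Icc, nsmul_eq_mul]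
        push_cast
        ring

theorem approximation_principle_over_Z_general
    (N Q : ℕ)
    (k : ℕ → ℂ) (ω : ℕ → ℂ) (S : ℂ)
    (ρ : ℕ → ℕ → ℝ)
    (hρnn : ∀ a q, 0 ≤ ρ a q)
    (hρone : ρ 0 1 = 1)
    (hρcomb : ∀ (b r s : ℕ), 0 < r → 0 < s →
      ∑ a ∈ Finset.range (r * s), (if a % r = b % r then ρ a (r * s) else 0) = ρ b r)
    (E : ℝ)
    (hE : ∀ q, 1 ≤ q → q ≤ Q → ∀ a : ℕ,
      ‖((∑ n ∈ (Finset.Icc 1 N).filter (fun n => n % q = a % q), k n)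
          - (ρ a q : ℂ) * S)‖ ≤ E)
    (W : ℝ) (hW0 : 0 ≤ W)
    (hW : ∀ q, 1 ≤ q → q ≤ Q ^ 2 → ∀ a : ℕ,
      ‖((∑ n ∈ (Finset.Icc 1 N).filter (fun n => n % q = a % q), ω n)
          - S / (q : ℂ))‖ ≤ W)
    (khat : ℕ → ℂ)
    (hkhat : ∀ n : ℕ, khat n = ω n *
      ∑ q ∈ Finset.Icc 1 Q,
        ∑ a ∈ (Finset.range q).filter (fun a => Nat.gcd a q = 1),
          eChar q (-(a * n : ℤ)) *
            ∑ c ∈ Finset.range q, (ρ c q : ℂ) * eChar q ((a * c : ℤ))) :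
    ∀ h, 1 ≤ h → h ≤ Q → ∀ b : ℕ,
      ‖(∑ n ∈ (Finset.Icc 1 N).filter (fun n => n % h = b % h),
          (k n - khat n))‖ ≤ W * (Q : ℝ) ^ 3 + E := by
  intro h hh hhQ b
  have hkhat_bound := norm_residueSum_khat_sub_le N Q ω khat S hρnn hρcomb hρone hW0 hW hkhat hh
    hhQ b
  have hsplit : ∑ n ∈ (Icc 1 N).filter (fun n => n % h = b % h), (k n - khat n) =
      (residueSum k N h b - ρ b h * S) - (residueSum khat N h b - ρ b h * S) := by
    rw [sum_sub_distrib, residueSum, residueSum]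
    ring
  have hk_bound : ‖residueSum k N h b - ρ b h * S‖ ≤ E := hE h hh hhQ b
  rw [hsplit]
  linarith [norm_sub_le (residueSum k N h b - ρ b h * S) (residueSum khat N h b - ρ b h * S)]

/-- Lemma 4.1 (Mainapp) of Browning–Heath-Brown: the general approximation principle over ℤ.
If `k(n)` is well distributed in residue classes to moduli `q ≤ Q` with density `ρ(a,q)·S` and
error `E`, and the smooth weight `ω(n)` is equidistributed with error `W`, then the explicit
approximation `k̂(n)` built from `ρ` and `ω` satisfies
`|∑_{n ≤ N, n ≡ b (h)} (k(n) − k̂(n))| ≤ W·Q³ + E` for all `h ≤ Q` and all `b`. -/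
theorem approximation_principle_over_Z
    (N Q : ℕ) (hQ : 1 ≤ Q)
    (k : ℕ → ℂ) (ω : ℕ → ℂ) (S : ℂ)
    (hS : S = ∑ n ∈ Finset.Icc 1 N, ω n)
    (ρ : ℕ → ℕ → ℝ)
    (hρnn : ∀ a q, 0 ≤ ρ a q)
    (hρper : ∀ a b q, a % q = b % q → ρ a q = ρ b q)
    (hρone : ρ 0 1 = 1)
    (hρcomb : ∀ (b r s : ℕ), 0 < r → 0 < s →
      ∑ a ∈ Finset.range (r * s), (if a % r = b % r then ρ a (r * s) else 0) = ρ b r)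
    (E : ℝ) (hE1 : 1 ≤ E)
    (hE : ∀ q, 1 ≤ q → q ≤ Q → ∀ a : ℕ,
      ‖((∑ n ∈ (Finset.Icc 1 N).filter (fun n => n % q = a % q), k n)
          - (ρ a q : ℂ) * S)‖ ≤ E)
    (W : ℝ) (hW0 : 0 ≤ W)
    (hW : ∀ q, 1 ≤ q → q ≤ Q ^ 2 → ∀ a : ℕ,
      ‖((∑ n ∈ (Finset.Icc 1 N).filter (fun n => n % q = a % q), ω n)
          - S / (q : ℂ))‖ ≤ W)
    (khat : ℕ → ℂ)
    (hkhat : ∀ n : ℕ, khat n = ω n *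
      ∑ q ∈ Finset.Icc 1 Q,
        ∑ a ∈ (Finset.range q).filter (fun a => Nat.gcd a q = 1),
          eChar q (-(a * n : ℤ)) *
            ∑ c ∈ Finset.range q, (ρ c q : ℂ) * eChar q ((a * c : ℤ))) :
    ∀ h, 1 ≤ h → h ≤ Q → ∀ b : ℕ,
      ‖(∑ n ∈ (Finset.Icc 1 N).filter (fun n => n % h = b % h),
          (k n - khat n))‖ ≤ W * (Q : ℝ) ^ 3 + E :=
  approximation_principle_over_Z_general N Q k ω S ρ hρnn hρone hρcomb E hE W hW0 hW khat hkhat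
end

section
/- Let n be even, let L be a quadratic field contained in a number field K of degree n with ℚ-basis {ω₁,…,ω_n}, let {1, τ} be a ℤ-basis of 𝔬_L and δ ∈ L^×; write δ·N_{K/L}(u₁ω₁+⋯+u_nω_n) = 𝐍₁(u) + 𝐍₂(u)·τ for forms 𝐍₁, 𝐍₂ of degree n/2 with coefficients in ℚ. Then for every u ∈ ℂⁿ with 𝐍_{K/ℚ}(u) := N_{K/ℚ}(u₁ω₁+⋯+u_nω_n) ≠ 0, the gradients ∇𝐍₁(u) and ∇𝐍₂(u) are linearly independent over ℂ; i.e., the map u ↦ (𝐍₁(u), 𝐍₂(u)) from ℂⁿ to ℂ² is nonsingular at every point where 𝐍_{K/ℚ}(u) ≠ 0. -/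
/-!
Over `ℂ` the norm form splits into the linear forms `ℓ_φ(u) = ∑ uᵢ φ(ωᵢ)`, one for each embedding
`φ : K → ℂ`. Grouping them by the embedding `σ` of `L` they restrict to gives polynomials `P_σ`
with `σ(δ) P_σ = 𝐍₁ + σ(τ) 𝐍₂`. By Dedekind's independence of characters the vectors
`(φ(ωᵢ))ᵢ` are linearly independent, and `∇P_σ(u)` is a combination of those with `φ` over `σ`
whose coefficients are products of the `ℓ_φ(u)`, nonzero when `𝐍_{K/ℚ}(u) ≠ 0`. Hence the
gradients `σ(δ) ∇P_σ(u) = ∇𝐍₁(u) + σ(τ) ∇𝐍₂(u)` for the two embeddings `σ` of `L` are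
independent, and so are `∇𝐍₁(u)` and `∇𝐍₂(u)`.
-/

open NumberField MvPolynomial

theorem Derivation.leibniz_prod {R A M ι : Type*} [CommSemiring R] [CommSemiring A]
    [AddCommMonoid M] [Algebra R A] [Module A M] [Module R M] [IsScalarTower R A M] [DecidableEq ι]
    (D : Derivation R A M) (s : Finset ι) (f : ι → A) :
    D (∏ i ∈ s, f i) = ∑ i ∈ s, (∏ j ∈ s.erase i, f j) • D (f i) := by
  induction s using Finset.induction_on with
  | empty => simp
  | insert a s has ih =>
    rw [Finset.prod_insert has, D.leibniz, ih, Finset.sum_insert has, Finset.erase_insert has,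
      Finset.smul_sum, add_comm]
    congr 1
    refine Finset.sum_congr rfl fun i hi => ?_
    rw [Finset.erase_insert_of_ne (ne_of_mem_of_not_mem hi has).symm,
      Finset.prod_insert (fun h => has (Finset.mem_of_mem_erase h)), smul_smul]

theorem MvPolynomial.funext_ratCast {σ R : Type*} [Field R] [CharZero R] {p q : MvPolynomial σ R}
    (h : ∀ x : σ → ℚ, eval (fun i => (x i : R)) p = eval (fun i => (x i : R)) q) : p = q := by
  refine funext_set (fun _ => Set.range ((↑) : ℚ → R))
    (fun _ => Set.infinite_range_of_injective Rat.cast_injective) fun x hx => ?_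
  choose y hy using fun i => hx i (Set.mem_univ i)
  simpa only [hy] using h y

theorem MvPolynomial.eval_ratCast_map {σ R : Type*} [Field R] [CharZero R]
    (p : MvPolynomial σ ℚ) (x : σ → ℚ) :
    eval (fun i => (x i : R)) (map (algebraMap ℚ R) p) = eval x p := by
  rw [← eq_ratCast (algebraMap ℚ R), map_eval]
  rfl

theorem LinearIndependent.sum_fiberwise_smul {ι κ R V : Type*} [Fintype ι] [Fintype κ]
    [DecidableEq κ] [Ring R] [NoZeroDivisors R] [AddCommGroup V] [Module R V] {v : ι → V}
    (hv : LinearIndependent R v) {g : ι → κ} (hg : Function.Surjective g) {a : κ → ι → R}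
    (ha : ∀ i, a (g i) i ≠ 0) :
    LinearIndependent R fun j => ∑ i with g i = j, a j i • v i := by
  rw [Fintype.linearIndependent_iff] at hv ⊢
  intro c hc j
  have hcomb : ∑ i, (c (g i) * a (g i) i) • v i = 0 := by
    rw [← hc, ← Finset.sum_fiberwise Finset.univ g]
    refine Finset.sum_congr rfl fun k _ => ?_
    rw [Finset.smul_sum]
    refine Finset.sum_congr rfl fun i hi => ?_
    rw [(Finset.mem_filter.mp hi).2, mul_smul]
  obtain ⟨i, rfl⟩ := hg j
  exact (mul_eq_zero.mp (hv _ hcomb i)).resolve_right (ha i)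

theorem LinearIndependent.pair_of_add_smul {ι K V : Type*} [Field K] [AddCommGroup V]
    [Module K V] {x y : V} {t : ι → K} (h : LinearIndependent K fun j => x + t j • y) {j₁ j₂ : ι}
    (hj : j₁ ≠ j₂) : LinearIndependent K ![x, y] := by
  have ht : t j₂ - t j₁ ≠ 0 := by
    refine sub_ne_zero.mpr fun ht => hj (h.injective ?_)
    simp only [ht]
  have h₁₂ : LinearIndependent K ![x + t j₁ • y, x + t j₂ • y] := by
    convert h.comp ![j₁, j₂] ?_ using 1
    · funext k
      fin_cases k <;> rfl
    · intro k l
      fin_cases k <;> fin_cases l <;> simp [hj, hj.symm]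
  rw [LinearIndependent.pair_iff] at h₁₂ ⊢
  intro a b hab
  set α := (a * t j₂ - b) / (t j₂ - t j₁)
  set β := (b - a * t j₁) / (t j₂ - t j₁)
  have hαβ : α + β = a := by simp only [α, β]; field_simp; ring
  have hαβ' : α * t j₁ + β * t j₂ = b := by simp only [α, β]; field_simp; ring
  obtain ⟨hα, hβ⟩ := h₁₂ α β (by rw [← hab, ← hαβ, ← hαβ']; module)
  rw [← hαβ, ← hαβ', hα, hβ]
  simp

theorem linearIndependent_algHom_comp_basis {ι F K E : Type*} [Field F] [Ring K] [Algebra F K]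
    [Field E] [Algebra F E] (b : Module.Basis ι F K) :
    LinearIndependent E fun φ : K →ₐ[F] E => fun i => φ (b i) :=
  (linearIndependent_toLinearMap F K E).map' (b.constr E).symm.toLinearMap
    (b.constr E).symm.ker

theorem prod_domRestrict_eq_apply_norm {F L K E : Type*} [Field F] [Field L] [Field K] [Field E]
    [Algebra F L] [Algebra F K] [Algebra L K] [IsScalarTower F L K] [Algebra F E] [IsAlgClosed E]
    [FiniteDimensional L K] [Algebra.IsSeparable L K] [Fintype (K →ₐ[F] E)]
    [DecidableEq (L →ₐ[F] E)] (σ : L →ₐ[F] E) (z : K) :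
    ∏ φ : K →ₐ[F] E with φ.domRestrict L = σ, φ z = σ (Algebra.norm L z) := by
  let := σ.toRingHom.toAlgebra
  refine Eq.trans ?_ (Algebra.norm_eq_prod_embeddings L E z).symm
  symm
  refine Finset.prod_bij (fun ψ _ => ψ.restrictScalars F) (fun ψ _ => ?_)
    (fun ψ _ ψ' _ h => AlgHom.restrictScalars_injective F h) (fun φ hφ => ?_) fun _ _ => rfl
  · simp only [Finset.mem_filter, Finset.mem_univ, true_and]
    ext l
    exact ψ.commutes l
  · obtain rfl := (Finset.mem_filter.mp hφ).2
    exact ⟨φ.extendScalars L, Finset.mem_univ _, rfl⟩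

section LinearForms

variable {ι K : Type*} [Fintype ι] [Semiring K] [Algebra ℚ K] (ω : ι → K)

noncomputable def linearForm (φ : K →ₐ[ℚ] ℂ) : MvPolynomial ι ℂ :=
  ∑ i, C (φ (ω i)) * X i

theorem eval_ratCast_linearForm (φ : K →ₐ[ℚ] ℂ) (x : ι → ℚ) :
    eval (fun i => (x i : ℂ)) (linearForm ω φ) = φ (∑ i, x i • ω i) := by
  simp [linearForm, Rat.smul_def, mul_comm]

variable [DecidableEq ι]

theorem pderiv_linearForm (φ : K →ₐ[ℚ] ℂ) (i : ι) : pderiv i (linearForm ω φ) = C (φ (ω i)) := by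
  simp [linearForm, pderiv_X, Pi.single_apply]

theorem gradient_prod_linearForm [DecidableEq (K →ₐ[ℚ] ℂ)] (s : Finset (K →ₐ[ℚ] ℂ))
    (u : ι → ℂ) :
    (fun i => eval u (pderiv i (∏ φ ∈ s, linearForm ω φ))) =
      ∑ φ ∈ s, (∏ ψ ∈ s.erase φ, eval u (linearForm ω ψ)) • fun i => φ (ω i) := by
  ext i
  simp [Derivation.leibniz_prod, pderiv_linearForm, Finset.sum_apply]

end LinearForms

section NormForms

variable {ι : Type*} [Fintype ι] {K : Type*} [Field K] [NumberField K]

theorem eval_linearForm_ne_zero {NQ : MvPolynomial ι ℚ} {ω : ι → K}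
    (hNQ : ∀ x : ι → ℚ, eval x NQ = Algebra.norm ℚ (∑ i, x i • ω i)) {u : ι → ℂ}
    (hu : aeval u NQ ≠ 0) (φ : K →ₐ[ℚ] ℂ) : eval u (linearForm ω φ) ≠ 0 := by
  have hsplit : map (algebraMap ℚ ℂ) NQ = ∏ φ : K →ₐ[ℚ] ℂ, linearForm ω φ :=
    funext_ratCast fun x => by
      simp only [eval_ratCast_map, map_prod, eval_ratCast_linearForm, hNQ]
      exact Algebra.norm_eq_prod_embeddings ℚ ℂ _
  rw [aeval_def, eval₂_eq_eval_map, hsplit, map_prod] at hu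
  exact Finset.prod_ne_zero_iff.mp hu φ (Finset.mem_univ φ)

variable (L : Type*) [Field L] [NumberField L] [Algebra L K] [IsScalarTower ℚ L K]

open Classical in
/-- The polynomial `P_σ`: the conjugate by `σ` of the norm form of `K/L`. -/
noncomputable def relNormForm (ω : ι → K) (σ : L →ₐ[ℚ] ℂ) : MvPolynomial ι ℂ :=
  ∏ φ : K →ₐ[ℚ] ℂ with φ.domRestrict L = σ, linearForm ω φ

variable {L}

theorem C_mul_relNormForm_eq {ω : ι → K} {δ τ : L} {N₁ N₂ : MvPolynomial ι ℚ}
    (hN : ∀ x : ι → ℚ, δ * Algebra.norm L (∑ i, x i • ω i)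
      = algebraMap ℚ L (eval x N₁) + eval x N₂ • τ) (σ : L →ₐ[ℚ] ℂ) :
    C (σ δ) * relNormForm L ω σ = map (algebraMap ℚ ℂ) N₁ + C (σ τ) * map (algebraMap ℚ ℂ) N₂ := by
  classical
  refine funext_ratCast fun x => ?_
  rw [relNormForm, eval_mul, eval_C, map_prod]
  simp only [eval_ratCast_linearForm]
  rw [prod_domRestrict_eq_apply_norm (E := ℂ) σ, ← map_mul, hN, map_add, AlgHom.commutes,
    map_rat_smul, eval_add, eval_mul, eval_C, eval_ratCast_map, eval_ratCast_map,
    eq_ratCast, Rat.smul_def, mul_comm]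

theorem linearIndependent_smul_gradient_relNormForm [DecidableEq ι] (ω : Module.Basis ι ℚ K)
    {c : (L →ₐ[ℚ] ℂ) → ℂ} (hc : ∀ σ, c σ ≠ 0) {u : ι → ℂ}
    (hu : ∀ φ, eval u (linearForm ω φ) ≠ 0) :
    LinearIndependent ℂ fun σ => c σ • fun i => eval u (pderiv i (relNormForm L ω σ)) := by
  classical
  have hexp : ∀ σ : L →ₐ[ℚ] ℂ, (c σ • fun i => eval u (pderiv i (relNormForm L ω σ))) =
      ∑ φ : K →ₐ[ℚ] ℂ with φ.domRestrict L = σ,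
        (c σ * ∏ ψ ∈ ({φ | φ.domRestrict L = σ} : Finset _).erase φ,
          eval u (linearForm ω ψ)) • fun i => φ (ω i) := by
    intro σ
    simp only [relNormForm, gradient_prod_linearForm, Finset.smul_sum, smul_smul]
  rw [funext hexp]
  exact (linearIndependent_algHom_comp_basis (E := ℂ) ω).sum_fiberwise_smul
    IsAlgClosed.surjective_domRestrict_of_isAlgebraic
    fun φ => mul_ne_zero (hc _) (Finset.prod_ne_zero_iff.mpr fun ψ _ => hu ψ)

end NormForms

theorem norm_form_components_nonsingular_general
    (n : ℕ)
    (L : Type) [Field L] [NumberField L] (hL2 : Module.finrank ℚ L = 2)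
    (τ : 𝓞 L)
    (K : Type) [Field K] [NumberField K] [Algebra L K] [IsScalarTower ℚ L K]
    (ω : Module.Basis (Fin n) ℚ K)
    (δ : L) (hδ : δ ≠ 0)
    (N₁ N₂ NQ : MvPolynomial (Fin n) ℚ)
    (hN12 : ∀ x : Fin n → ℚ,
      δ * Algebra.norm L (∑ i, x i • ω i)
        = algebraMap ℚ L (MvPolynomial.eval x N₁)
          + (MvPolynomial.eval x N₂) • ((τ : 𝓞 L) : L))
    (hNQ : ∀ x : Fin n → ℚ,
      MvPolynomial.eval x NQ = Algebra.norm ℚ (∑ i, x i • ω i))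
    (u : Fin n → ℂ) (hu : MvPolynomial.aeval u NQ ≠ (0 : ℂ)) :
    LinearIndependent ℂ
      ![(fun i => MvPolynomial.aeval u (MvPolynomial.pderiv i N₁) : Fin n → ℂ),
        (fun i => MvPolynomial.aeval u (MvPolynomial.pderiv i N₂) : Fin n → ℂ)] := by
  obtain ⟨σ₁, σ₂, hσ⟩ : ∃ σ₁ σ₂ : L →ₐ[ℚ] ℂ, σ₁ ≠ σ₂ := by
    rw [← nontrivial_iff, ← Fintype.one_lt_card_iff_nontrivial, AlgHom.card, hL2]
    norm_num
  have hgrad : ∀ σ : L →ₐ[ℚ] ℂ, (σ δ • fun i => eval u (pderiv i (relNormForm L ω σ))) =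
      (fun i => aeval u (pderiv i N₁)) + σ τ • fun i => aeval u (pderiv i N₂) := by
    intro σ
    ext i
    simpa [aeval_def, eval_map, pderiv_map] using
      congr_arg (fun p => eval u (pderiv i p)) (C_mul_relNormForm_eq hN12 σ)
  have hind := linearIndependent_smul_gradient_relNormForm ω (fun σ => (map_ne_zero σ).mpr hδ)
    (eval_linearForm_ne_zero hNQ hu)
  exact LinearIndependent.pair_of_add_smul (by simpa only [hgrad] using hind) hσ

/-- The nonsingularity claim of §5 of Browning–Heath-Brown: if `δ·𝐍_{K/L} = 𝐍₁ + 𝐍₂τ` over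
the quadratic subfield `L` of a degree-`n` field `K`, then at every point `u ∈ ℂⁿ` with
`𝐍_{K/ℚ}(u) ≠ 0` the gradients `∇𝐍₁(u)` and `∇𝐍₂(u)` are linearly independent over `ℂ`. -/
theorem norm_form_components_nonsingular
    (n : ℕ) (hn : 2 ≤ n) (hneven : Even n)
    (L : Type) [Field L] [NumberField L] (hL2 : Module.finrank ℚ L = 2)
    (τ : 𝓞 L) (bZ : Module.Basis (Fin 2) ℤ (𝓞 L)) (hb0 : bZ 0 = 1) (hb1 : bZ 1 = τ)
    (K : Type) [Field K] [NumberField K] [Algebra L K] [IsScalarTower ℚ L K]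
    (hKn : Module.finrank ℚ K = n)
    (ω : Module.Basis (Fin n) ℚ K)
    (δ : L) (hδ : δ ≠ 0)
    (N₁ N₂ NQ : MvPolynomial (Fin n) ℚ)
    (hN12 : ∀ x : Fin n → ℚ,
      δ * Algebra.norm L (∑ i, x i • ω i)
        = algebraMap ℚ L (MvPolynomial.eval x N₁)
          + (MvPolynomial.eval x N₂) • ((τ : 𝓞 L) : L))
    (hNQ : ∀ x : Fin n → ℚ,
      MvPolynomial.eval x NQ = Algebra.norm ℚ (∑ i, x i • ω i))
    (u : Fin n → ℂ) (hu : MvPolynomial.aeval u NQ ≠ (0 : ℂ)) :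
    LinearIndependent ℂ
      ![(fun i => MvPolynomial.aeval u (MvPolynomial.pderiv i N₁) : Fin n → ℂ),
        (fun i => MvPolynomial.aeval u (MvPolynomial.pderiv i N₂) : Fin n → ℂ)] :=
  norm_form_components_nonsingular_general n L hL2 τ K ω δ hδ N₁ N₂ NQ hN12 hNQ u hu
end

section
/- Let K be a number field of degree n with integral basis {ω₁,…,ω_n} of 𝔬_K, and let 𝐍_{K/ℚ}(s) := N_{K/ℚ}(s₁ω₁+⋯+s_nω_n). Then for every prime p and every integer σ ≥ 0, #{s ∈ ℕⁿ : 0 < s_j ≤ p^σ for all j, and p^σ divides 𝐍_{K/ℚ}(s)} ≤ (σ + 1)ⁿ · p^{(n−1)σ}. -/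
/-!
Put `x = ∑ sᵢ ωᵢ`, `J = (p)^σ` and `𝔞 = (x) + J`. The map `s ↦ (𝔞, x mod J)` is injective, since
distinct points of the box `(0, p^σ]ⁿ` are distinct modulo `p^σ 𝔬_K`. As `𝔞 ∣ (p)^σ` and `(p)` has
at most `n` prime factors, `𝔞` takes at most `(σ + 1)ⁿ` values. Moreover `p^σ ∣ N(x)` forces
`p^σ ∣ N(𝔞)`: either some prime `𝔮 ∣ p` divides `(x)` at least as often as it divides `J`, and
then `N(𝔮)^σ ∣ N(𝔞)`, or `𝔞` and `(x)` have the same factorization above `p`. So `x mod J` lies in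
`𝔞/J`, which has `N(J)/N(𝔞) ≤ p^{nσ}/p^σ` elements.
-/

open NumberField UniqueFactorizationMonoid

theorem Nat.card_subtype_le_card_mul_of_forall_card_fiber_le {α β : Type*} [Finite β]
    {P : α → Prop} (f : α → β) {k : ℕ}
    (h : ∀ y, (∃ x, P x ∧ f x = y) → Nat.card {x // P x ∧ f x = y} ≤ k) :
    Nat.card {x // P x} ≤ Nat.card β * k := by
  cases finite_or_infinite {x // P x}
  · have := Fintype.ofFinite β
    rw [← Nat.card_congr (Equiv.sigmaFiberEquiv (f ∘ Subtype.val)), Nat.card_sigma,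
      Nat.card_eq_fintype_card, ← smul_eq_mul, ← Finset.card_univ]
    refine Finset.sum_le_card_nsmul _ _ _ fun y _ => ?_
    refine (Nat.card_congr (Equiv.subtypeSubtypeEquivSubtypeInter P (f · = y))).trans_le ?_
    rcases isEmpty_or_nonempty {x // P x ∧ f x = y} with hy | ⟨x, hx⟩
    · simp
    · exact h y ⟨x, hx⟩
  · simp [Nat.card_eq_zero_of_infinite]

namespace Multiset

variable {α : Type*} [DecidableEq α]

theorem card_Iic_nsmul_le (m : Multiset α) (σ : ℕ) :
    (Finset.Iic (σ • m)).card ≤ (σ + 1) ^ card m := by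
  rcases eq_or_ne σ 0 with rfl | hσ
  · simp [card_Iic]
  rw [card_Iic, toFinset_nsmul m σ hσ, ← toFinset_sum_count_eq, ← Finset.prod_pow_eq_pow_sum]
  refine Finset.prod_le_prod' fun q _ => ?_
  simpa [count_nsmul, add_comm, mul_comm] using
    one_add_le_pow_of_two_add_nonneg (R := ℕ) (a := σ) (by positivity) (count q m)

/-- For `s`, `t` the prime factors of `(x)`, `(p)` and `f = N`, the multiset `s ∩ σ • t` is the
factorization of `(x) + (p)^σ`. -/
theorem pow_dvd_prod_map_inter_nsmul {p σ : ℕ} (hp : p.Prime) {s t : Multiset α} {f : α → ℕ}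
    (ht : ∀ q ∈ t, p ∣ f q) (hs : ∀ q ∈ s, p ∣ f q → q ∈ t) (h : p ^ σ ∣ (s.map f).prod) :
    p ^ σ ∣ ((s ∩ σ • t).map f).prod := by
  by_cases hsat : ∃ q ∈ t, σ * count q t ≤ count q s
  · obtain ⟨q, hqt, hq⟩ := hsat
    have hle : replicate σ q ≤ s ∩ σ • t := by
      rw [le_iff_count]
      intro r
      rw [count_inter, count_nsmul, count_replicate]
      split_ifs with hrq
      · subst hrq
        have hσ := Nat.le_mul_of_pos_right σ (count_pos.mpr hqt)
        exact le_min (hσ.trans hq) hσ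
      · exact Nat.zero_le _
    calc p ^ σ ∣ f q ^ σ := pow_dvd_pow_of_dvd (ht q hqt) σ
      _ = ((replicate σ q).map f).prod := by simp
      _ ∣ _ := prod_dvd_prod_of_le (map_le_map hle)
  · push Not at hsat
    have hle : s.filter (· ∈ t) ≤ s ∩ σ • t := by
      rw [le_iff_count]
      intro r
      rw [count_filter, count_inter, count_nsmul]
      split_ifs with hr
      · exact le_min le_rfl (hsat r hr).le
      · exact Nat.zero_le _
    have hcop : Nat.Coprime (p ^ σ) ((s.filter (· ∉ t)).map f).prod := by
      refine Nat.Coprime.pow_left _ (Nat.coprime_multiset_prod_right_iff.mpr fun x hx => ?_)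
      obtain ⟨q, hq, rfl⟩ := mem_map.mp hx
      obtain ⟨hqs, hqt⟩ := mem_filter.mp hq
      exact hp.coprime_iff_not_dvd.mpr fun hpq => hqt (hs q hqs hpq)
    rw [← filter_add_not (· ∈ t) s, map_add, prod_add] at h
    exact (hcop.dvd_of_dvd_mul_right h).trans (prod_dvd_prod_of_le (map_le_map hle))

end Multiset

section UniqueFactorization

variable {α : Type*} [CommMonoidWithZero α] [NormalizationMonoid α]
  [UniqueFactorizationMonoid α] [Subsingleton αˣ]

theorem normalizedFactors_injOn_dvd {y : α} (hy : y ≠ 0) :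
    Set.InjOn normalizedFactors {a | a ∣ y} := by
  intro a ha a' ha' h
  have hne : ∀ {c}, c ∣ y → c ≠ 0 := fun hc h0 => hy (zero_dvd_iff.mp (h0 ▸ hc))
  rw [← associated_iff_eq.mp (prod_normalizedFactors (hne ha)),
    ← associated_iff_eq.mp (prod_normalizedFactors (hne ha')), h]

variable [DecidableEq α]

noncomputable def normalizedFactorsDvdEmbedding {y : α} (hy : y ≠ 0) :
    {a // a ∣ y} ↪ Finset.Iic (normalizedFactors y) where
  toFun a := ⟨normalizedFactors a.1, Finset.mem_Iic.mpr <|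
    (dvd_iff_normalizedFactors_le_normalizedFactors (fun h0 => hy (zero_dvd_iff.mp (h0 ▸ a.2)))
      hy).mp a.2⟩
  inj' a a' h := Subtype.ext (normalizedFactors_injOn_dvd hy a.2 a'.2 (congrArg Subtype.val h))

theorem finite_subtype_dvd {y : α} (hy : y ≠ 0) : Finite {a // a ∣ y} :=
  Finite.of_injective _ (normalizedFactorsDvdEmbedding hy).injective

theorem card_subtype_dvd_pow_le {y : α} (hy : y ≠ 0) (σ : ℕ) :
    Nat.card {a // a ∣ y ^ σ} ≤ (σ + 1) ^ Multiset.card (normalizedFactors y) := by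
  calc Nat.card {a // a ∣ y ^ σ}
      ≤ Nat.card (Finset.Iic (normalizedFactors (y ^ σ))) :=
        Nat.card_le_card_of_injective _ (normalizedFactorsDvdEmbedding (pow_ne_zero σ hy)).injective
    _ ≤ (σ + 1) ^ Multiset.card (normalizedFactors y) := by
      rw [Nat.card_eq_finsetCard, normalizedFactors_pow]
      exact Multiset.card_Iic_nsmul_le _ σ

end UniqueFactorization

theorem Module.Basis.eq_of_sub_mem_span_natCast {ι R : Type*} [Fintype ι] [CommRing R]
    (b : Module.Basis ι ℤ R) {m : ℕ} {s s' : ι → ℕ} (hs : ∀ i, 0 < s i ∧ s i ≤ m)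
    (hs' : ∀ i, 0 < s' i ∧ s' i ≤ m)
    (h : ∑ i, (s i : ℤ) • b i - ∑ i, (s' i : ℤ) • b i ∈ Ideal.span {(m : R)}) : s = s' := by
  obtain ⟨z, hz⟩ := Ideal.mem_span_singleton'.mp h
  funext i
  have hxy : ∑ i, ((s i : ℤ) - s' i) • b i = (m : ℤ) • z := by
    rw [zsmul_eq_mul, Int.cast_natCast, mul_comm, hz]
    simp only [sub_smul, Finset.sum_sub_distrib]
  have hi : (m : ℤ) ∣ (s i : ℤ) - s' i := by
    refine ⟨b.repr z i, ?_⟩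
    simpa only [b.repr_sum_self, map_smul, Finsupp.smul_apply, smul_eq_mul] using
      congrArg (fun w => b.repr w i) hxy
  have := hs i
  have := hs' i
  have := Int.eq_zero_of_abs_lt_dvd hi (by rw [abs_lt]; omega)
  omega

namespace Ideal

variable {S : Type*} [CommRing S] [IsDedekindDomain S]

theorem span_natCast_pow_ne_bot [CharZero S] {p : ℕ} (hp : p ≠ 0) (σ : ℕ) :
    span {(p : S)} ^ σ ≠ ⊥ :=
  pow_ne_zero σ (by simpa using hp)

variable [Module.Free ℤ S]

theorem card_map_quotient_mk_mul_absNorm {J a : Ideal S} (hJa : J ≤ a) :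
    Nat.card (a.map (Quotient.mk J)) * absNorm a = absNorm J := by
  rw [absNorm_apply, absNorm_apply, Submodule.cardQuot_apply, Submodule.cardQuot_apply,
    Submodule.card_eq_card_quotient_mul_card (a.map (Quotient.mk J))]
  congr 1
  exact (Nat.card_congr (DoubleQuot.quotQuotEquivQuotOfLE hJa).toEquiv).symm

variable [Module.Finite ℤ S]

theorem natCast_mem_of_dvd_absNorm {p : ℕ} (hp : p.Prime) {q : Ideal S} [q.IsMaximal]
    (h : p ∣ absNorm q) : (p : S) ∈ q := by
  obtain ⟨r, k, -, hrq, hr, hqr⟩ := exists_prime_and_absNorm_eq_pow q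
  rw [hqr] at h
  rwa [(Nat.prime_dvd_prime_iff_eq hp hr).mp (hp.dvd_of_dvd_pow h)]

theorem dvd_absNorm_of_natCast_mem {p : ℕ} (hp : p.Prime) {q : Ideal S} (hq : q ≠ ⊤)
    (h : (p : S) ∈ q) : p ∣ absNorm q := by
  by_contra hpq
  have hdvd : absNorm q ∣ p ^ Module.finrank ℤ S := by
    rw [← absNorm_span_natCast]
    exact absNorm_dvd_absNorm_of_le ((span_singleton_le_iff_mem q).mpr h)
  exact hq <| absNorm_eq_one_iff.mp <|
    Nat.Coprime.eq_one_of_dvd ((hp.coprime_iff_not_dvd.mpr hpq).symm.pow_right _) hdvd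

theorem card_map_quotient_mk_span_pow_le {p σ : ℕ} (hp : p.Prime) {a : Ideal S}
    (ha : span {(p : S)} ^ σ ≤ a) (hNa : p ^ σ ≤ absNorm a) :
    Nat.card (a.map (Quotient.mk (span {(p : S)} ^ σ))) ≤ p ^ ((Module.finrank ℤ S - 1) * σ) := by
  have key := card_map_quotient_mk_mul_absNorm ha
  rw [map_pow, absNorm_span_natCast, ← pow_mul] at key
  refine Nat.le_of_mul_le_mul_right ?_ (pow_pos hp.pos σ)
  calc _ ≤ Nat.card (a.map (Quotient.mk (span {(p : S)} ^ σ))) * absNorm a := by gcongr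
    _ = p ^ (Module.finrank ℤ S * σ) := key
    _ ≤ p ^ ((Module.finrank ℤ S - 1) * σ) * p ^ σ := by
      rw [← pow_add, ← Nat.succ_mul]
      exact Nat.pow_le_pow_right hp.pos (Nat.mul_le_mul_right σ (by omega))

variable [CharZero S]

theorem card_normalizedFactors_span_natCast_le {p : ℕ} (hp : p.Prime) :
    Multiset.card (normalizedFactors (span {(p : S)})) ≤ Module.finrank ℤ S := by
  have hP : span {(p : S)} ≠ ⊥ := by simpa using hp.ne_zero
  have hnorm : ∀ N ∈ (normalizedFactors (span {(p : S)})).map absNorm, p ≤ N := by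
    intro N hN
    obtain ⟨q, hq, rfl⟩ := Multiset.mem_map.mp hN
    obtain ⟨hqprime, hPq⟩ := (mem_normalizedFactors_iff hP).mp hq
    refine Nat.le_of_dvd (Nat.pos_of_ne_zero ?_) ?_
    · exact absNorm_eq_zero_iff.not.mpr (ne_bot_of_le_ne_bot hP hPq)
    · exact dvd_absNorm_of_natCast_mem hp hqprime.ne_top (hPq (mem_span_singleton_self _))
  refine (Nat.pow_le_pow_iff_right hp.one_lt).mp ?_
  calc p ^ Multiset.card (normalizedFactors (span {(p : S)}))
      ≤ ((normalizedFactors (span {(p : S)})).map absNorm).prod := by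
        simpa using Multiset.pow_card_le_prod hnorm
    _ = p ^ Module.finrank ℤ S := by
        rw [← map_multiset_prod, prod_normalizedFactors_eq_self hP, absNorm_span_natCast]

theorem card_dvd_span_natCast_pow_le {p : ℕ} (hp : p.Prime) (σ : ℕ) :
    Nat.card {a : Ideal S // a ∣ span {(p : S)} ^ σ} ≤ (σ + 1) ^ Module.finrank ℤ S := by
  classical
  exact (card_subtype_dvd_pow_le (by simpa using hp.ne_zero) σ).trans
    (Nat.pow_le_pow_right σ.succ_pos (card_normalizedFactors_span_natCast_le hp))

theorem pow_dvd_absNorm_sup_span_pow {p σ : ℕ} (hp : p.Prime) {I : Ideal S}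
    (h : p ^ σ ∣ absNorm I) : p ^ σ ∣ absNorm (I ⊔ span {(p : S)} ^ σ) := by
  classical
  have hP : span {(p : S)} ≠ ⊥ := by simpa using hp.ne_zero
  rcases eq_or_ne I ⊥ with rfl | hI
  · rw [bot_sup_eq, map_pow, absNorm_span_natCast, ← pow_mul, mul_comm]
    exact pow_dvd_pow _ (Nat.le_mul_of_pos_right σ Module.finrank_pos)
  rw [← prod_normalizedFactors_eq_self hI, map_multiset_prod] at h
  rw [sup_eq_prod_inf_factors hI (pow_ne_zero σ hP), map_multiset_prod, normalizedFactors_pow]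
  refine Multiset.pow_dvd_prod_map_inter_nsmul hp (fun q hq => ?_) (fun q hq hpq => ?_) h
  · obtain ⟨hqprime, hPq⟩ := (mem_normalizedFactors_iff hP).mp hq
    exact dvd_absNorm_of_natCast_mem hp hqprime.ne_top (hPq (mem_span_singleton_self _))
  · obtain ⟨hqprime, hIq⟩ := (mem_normalizedFactors_iff hI).mp hq
    have := hqprime.isMaximal (ne_bot_of_le_ne_bot hI hIq)
    exact (mem_normalizedFactors_iff hP).mpr
      ⟨hqprime, (span_singleton_le_iff_mem q).mpr (natCast_mem_of_dvd_absNorm hp hpq)⟩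

theorem pow_le_absNorm_sup_span_pow {p σ : ℕ} (hp : p.Prime) {x : S}
    (h : (p : ℤ) ^ σ ∣ Algebra.norm ℤ x) : p ^ σ ≤ absNorm (span {x} ⊔ span {(p : S)} ^ σ) := by
  refine Nat.le_of_dvd (Nat.pos_of_ne_zero ?_) (pow_dvd_absNorm_sup_span_pow hp ?_)
  · exact absNorm_eq_zero_iff.not.mpr
      (ne_bot_of_le_ne_bot (span_natCast_pow_ne_bot hp.ne_zero σ) le_sup_right)
  · simpa [absNorm_span_singleton, ← Int.natCast_dvd] using h

theorem card_le_of_forall_sum_smul_mem {ι : Type*} [Fintype ι] (b : Module.Basis ι ℤ S)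
    {p σ : ℕ} (hp : p.Prime) {a : Ideal S} (ha : span {(p : S)} ^ σ ≤ a)
    (hNa : p ^ σ ≤ absNorm a) {P : (ι → ℕ) → Prop} (hbox : ∀ s, P s → ∀ j, 0 < s j ∧ s j ≤ p ^ σ)
    (hmem : ∀ s, P s → ∑ i, (s i : ℤ) • b i ∈ a) :
    Nat.card {s // P s} ≤ p ^ ((Module.finrank ℤ S - 1) * σ) := by
  have : Finite (S ⧸ span {(p : S)} ^ σ) := (absNorm_ne_zero_iff _).mp
    (absNorm_eq_zero_iff.not.mpr (span_natCast_pow_ne_bot hp.ne_zero σ))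
  let g : {s // P s} → a.map (Quotient.mk (span {(p : S)} ^ σ)) := fun s =>
    ⟨Quotient.mk _ (∑ i, (s.1 i : ℤ) • b i), mem_map_of_mem _ (hmem s s.2)⟩
  refine (Nat.card_le_card_of_injective g fun s s' h => ?_).trans
    (card_map_quotient_mk_span_pow_le hp ha hNa)
  refine Subtype.ext (b.eq_of_sub_mem_span_natCast (hbox _ s.2) (hbox _ s'.2) ?_)
  rw [Nat.cast_pow, ← span_singleton_pow]
  exact Quotient.eq.mp (congrArg Subtype.val h)

end Ideal

theorem norm_form_divisibility_count_general
    (K : Type) [Field K] [NumberField K]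
    (n : ℕ)
    (b : Module.Basis (Fin n) ℤ (𝓞 K))
    (p : ℕ) (hp : p.Prime) (σ : ℕ) :
    Nat.card {s : Fin n → ℕ //
        (∀ j, 0 < s j ∧ s j ≤ p ^ σ)
        ∧ (p : ℤ) ^ σ ∣ Algebra.norm ℤ (∑ i, (s i : ℤ) • b i)}
      ≤ (σ + 1) ^ n * p ^ ((n - 1) * σ) := by
  obtain rfl : Module.finrank ℤ (𝓞 K) = n := by simpa using Module.finrank_eq_card_basis b
  have := finite_subtype_dvd (Ideal.span_natCast_pow_ne_bot (S := 𝓞 K) hp.ne_zero σ)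
  let f (s : Fin _ → ℕ) : {a : Ideal (𝓞 K) // a ∣ Ideal.span {(p : 𝓞 K)} ^ σ} :=
    ⟨Ideal.span {∑ i, (s i : ℤ) • b i} ⊔ Ideal.span {(p : 𝓞 K)} ^ σ,
      Ideal.dvd_iff_le.mpr le_sup_right⟩
  refine (Nat.card_subtype_le_card_mul_of_forall_card_fiber_le f ?_).trans
    (Nat.mul_le_mul_right _ (Ideal.card_dvd_span_natCast_pow_le hp σ))
  rintro _ ⟨s₀, hs₀, rfl⟩
  refine Ideal.card_le_of_forall_sum_smul_mem b hp le_sup_right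
    (Ideal.pow_le_absNorm_sup_span_pow hp hs₀.2) (fun s hs => hs.1.1) fun s hs => ?_
  change _ ∈ (f s₀).1
  rw [← hs.2]
  exact Ideal.mem_sup_left (Ideal.mem_span_singleton_self _)

/-- The counting estimate of §9 of Browning–Heath-Brown (used for `T₂(p^t)`): for a number
field `K` of degree `n` with integral basis `{ω₁,…,ω_n}`, a prime `p` and `σ ≥ 0`, the number
of `s ∈ ℕⁿ` with `0 < s_j ≤ p^σ` and `p^σ ∣ 𝐍_{K/ℚ}(s)` is at most `(σ+1)ⁿ·p^{(n−1)σ}`. -/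
theorem norm_form_divisibility_count
    (K : Type) [Field K] [NumberField K]
    (n : ℕ) (hn : Module.finrank ℚ K = n)
    (b : Module.Basis (Fin n) ℤ (𝓞 K))
    (p : ℕ) (hp : p.Prime) (σ : ℕ) :
    Nat.card {s : Fin n → ℕ //
        (∀ j, 0 < s j ∧ s j ≤ p ^ σ)
        ∧ (p : ℤ) ^ σ ∣ Algebra.norm ℤ (∑ i, (s i : ℤ) • b i)}
      ≤ (σ + 1) ^ n * p ^ ((n - 1) * σ) :=
  norm_form_divisibility_count_general K n b p hp σ
end

section
/- Let n ≥ 4 be even, let L be a quadratic field with ℤ-basis {1, τ} of 𝔬_L, contained in a number field K of degree n with integral basis {ω₁,…,ω_n} of 𝔬_K satisfying ω₁ = 1. Write 𝐍_{K/L}(v) := N_{K/L}(v₁ω₁+⋯+v_nω_n) ∈ 𝔬_L for v ∈ ℤⁿ, and for k ∈ ℕ define R(k) := #{v ∈ ℕⁿ : 0 < v_j ≤ k for all j, and k divides 𝐍_{K/L}(v) in 𝔬_L}. Then for every ξ > 0 one has R(k) ≪_ξ k^{n−2+ξ} for all k ≥ 1 (implied constant depending only on ξ and K), and R(k) < kⁿ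 for every k > 1. -/
/-!
If `k ∣ 𝐍_{K/L}(α)`, the ideal `𝔟 = (α) + (k)` of `𝔬_K` satisfies `k² ∣ N𝔟`. Indeed, pick
`β ∈ 𝔟` with `(β) = 𝔟𝔠` and `𝔠` coprime to `k`. Since `𝐍_{K/L}(x + ky) ≡ 𝐍_{K/L}(x) mod k`
(compare the products of conjugates), every element of `𝔟` has relative norm divisible by `k`,
so `k² ∣ N(β) = N𝔟 · N𝔠` and `N𝔠` is prime to `k`.

Distinct points of the box `[1, k]ⁿ` are distinct modulo `k`, and the points with a given `𝔟`
reduce into `𝔟/(k)`, which has `kⁿ/N𝔟 ≤ kⁿ⁻²` elements. Hence `R(k) ≤ τ(k) kⁿ⁻²`, where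
`τ(k) ≪_ε k^ε` is the number of ideals dividing `(k)`. Finally the point `(1, k, …, k)`
gives `1 + k w`, whose relative norm is `≡ 1 mod k`, so `R(k) < kⁿ`.
-/

open NumberField UniqueFactorizationMonoid

theorem Nat.card_le_card_mul_of_card_fiber_le {α β : Type*} [Finite α] [Finite β]
    (f : α → β) {m : ℕ} (h : ∀ y, Nat.card {x // f x = y} ≤ m) : Nat.card α ≤ Nat.card β * m := by
  have := Fintype.ofFinite β
  calc Nat.card α = Nat.card (Σ y, {x // f x = y}) :=
        Nat.card_congr (Equiv.sigmaFiberEquiv f).symm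
    _ = ∑ y, Nat.card {x // f x = y} := Nat.card_sigma
    _ ≤ ∑ _y : β, m := Finset.sum_le_sum fun y _ => h y
    _ = Nat.card β * m := by simp [Nat.card_eq_fintype_card]

theorem card_box_subtype_lt {ι : Type*} [Fintype ι] {k : ℕ} {Q : (ι → ℕ) → Prop}
    {v₀ : ι → ℕ} (hv₀ : ∀ j, 0 < v₀ j ∧ v₀ j ≤ k) (hQ : ¬ Q v₀) :
    Nat.card {v : ι → ℕ // (∀ j, 0 < v j ∧ v j ≤ k) ∧ Q v} < k ^ Fintype.card ι := by
  classical
  set box := Fintype.piFinset fun _ : ι => Finset.Icc 1 k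
  have hbox : ∀ v, v ∈ box ↔ ∀ j, 0 < v j ∧ v j ≤ k := by
    simp [box, Finset.mem_Icc, Nat.one_le_iff_ne_zero, Nat.pos_iff_ne_zero]
  calc Nat.card {v : ι → ℕ // (∀ j, 0 < v j ∧ v j ≤ k) ∧ Q v}
      = (box.filter Q).card := by
        rw [← Nat.card_eq_finsetCard]
        exact Nat.card_congr (Equiv.subtypeEquivRight fun v => by simp [hbox])
    _ < box.card := Finset.card_lt_card (Finset.filter_ssubset.2 ⟨v₀, (hbox v₀).2 hv₀, hQ⟩)
    _ = k ^ Fintype.card ι := by simp [box]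

theorem Nat.le_pow_sub_of_mul_eq_pow {a m k N d : ℕ} (hk : k ≠ 0) (hd : d ≤ N)
    (h : a * m = k ^ N) (hm : k ^ d ∣ m) : a ≤ k ^ (N - d) := by
  obtain ⟨m, rfl⟩ := hm
  have h' : a * m * k ^ d = k ^ (N - d) * k ^ d := by rw [pow_sub_mul_pow k hd, ← h]; ring
  have ham := Nat.eq_of_mul_eq_mul_right (pow_pos (Nat.pos_of_ne_zero hk) d) h'
  rw [← ham]
  refine Nat.le_mul_of_pos_right a (Nat.pos_of_ne_zero fun h0 => pow_ne_zero (N - d) hk ?_)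
  rw [← ham, h0, mul_zero]

theorem Module.Basis.eq_of_sub_mem_span_natCast_s19 {S ι : Type*} [CommRing S] [Fintype ι]
    (ω : Module.Basis ι ℤ S) {k : ℕ} {v w : ι → ℕ} (hv : ∀ j, 0 < v j ∧ v j ≤ k)
    (hw : ∀ j, 0 < w j ∧ w j ≤ k)
    (h : ∑ i, (v i : ℤ) • ω i - ∑ i, (w i : ℤ) • ω i ∈ Ideal.span {(k : S)}) : v = w := by
  obtain ⟨c, hc⟩ := Ideal.mem_span_singleton'.1 h
  funext i
  have hdvd : (k : ℤ) ∣ v i - w i := by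
    have hc' : (k : ℤ) • c = ∑ i, (v i : ℤ) • ω i - ∑ i, (w i : ℤ) • ω i := by
      rw [← hc, natCast_zsmul, nsmul_eq_mul, mul_comm]
    refine ⟨ω.repr c i, ?_⟩
    have := congrArg (fun x => ω.repr x i) hc'
    simp only [map_sub, map_smul, Module.Basis.repr_sum_self, Finsupp.smul_apply, smul_eq_mul,
      Finsupp.coe_sub, Pi.sub_apply] at this
    exact this.symm
  have := Int.eq_zero_of_abs_lt_dvd hdvd (by have := hv i; have := hw i; rw [abs_lt]; omega)
  omega

theorem Nat.coprime_card_of_isUnit_natCast {R : Type*} [CommRing R] [Finite R] {k : ℕ}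
    (hk : IsUnit (k : R)) : Nat.Coprime (Nat.card R) k := by
  have := Fintype.ofFinite R
  refine Nat.coprime_of_dvd fun p hp hpR hpk => ?_
  have : Fact p.Prime := ⟨hp⟩
  rw [Nat.card_eq_fintype_card] at hpR
  exact not_isUnit_prime_of_dvd_card hpR (isUnit_of_dvd_unit (Nat.cast_dvd_cast hpk) hk)

theorem IsDedekindDomain.exists_mem_span_singleton_eq_mul_sup_eq_top {R : Type*} [CommRing R]
    [IsDedekindDomain R] {b a : Ideal R} (hb : b ≠ ⊥) (ha : a ≠ ⊥) :
    ∃ β ∈ b, ∃ c : Ideal R, Ideal.span {β} = b * c ∧ c ⊔ a = ⊤ := by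
  obtain ⟨β, hβ⟩ := IsDedekindDomain.exists_sup_span_eq (Ideal.mul_le_left : b * a ≤ b)
    (mul_ne_zero hb ha)
  have hβb : β ∈ b := hβ ▸ Ideal.mem_sup_right (Ideal.mem_span_singleton_self β)
  obtain ⟨c, hc⟩ := Ideal.dvd_iff_le.2 ((Ideal.span_singleton_le_iff_mem _).2 hβb)
  refine ⟨β, hβb, c, hc, ?_⟩
  have : b * (c ⊔ a) = b * ⊤ := by rw [Ideal.mul_sup, ← hc, sup_comm, hβ, Ideal.mul_top]
  exact mul_left_cancel₀ hb this

theorem Ideal.span_natCast_eq_top_iff {S : Type*} [CommRing S] [IsDedekindDomain S]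
    [Module.Free ℤ S] [Module.Finite ℤ S] {k : ℕ} : Ideal.span {(k : S)} = ⊤ ↔ k = 1 := by
  refine ⟨fun h => ?_, fun h => by simp [h]⟩
  have := Ideal.absNorm_span_natCast (S := S) k
  rwa [h, Ideal.absNorm_top, eq_comm, pow_eq_one_iff, or_iff_left Module.finrank_pos.ne'] at this

theorem Ideal.coprime_absNorm_of_sup_span_natCast_eq_top {S : Type*} [CommRing S]
    [IsDedekindDomain S] [Module.Free ℤ S] [Module.Finite ℤ S] {c : Ideal S} {k : ℕ}
    (h : c ⊔ Ideal.span {(k : S)} = ⊤) : Nat.Coprime (Ideal.absNorm c) k := by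
  rcases eq_or_ne c ⊥ with rfl | hc
  · rw [bot_sup_eq, Ideal.span_natCast_eq_top_iff] at h
    simp [h]
  have : Finite (S ⧸ c) := (Ideal.absNorm_ne_zero_iff c).1 (Ideal.absNorm_eq_zero_iff.not.2 hc)
  have hunit : IsUnit (k : S ⧸ c) := by
    obtain ⟨a, ha, _, hb, hab⟩ := Submodule.mem_sup.1 (h ▸ Submodule.mem_top : (1 : S) ∈ _)
    obtain ⟨r, rfl⟩ := Ideal.mem_span_singleton'.1 hb
    refine IsUnit.of_mul_eq_one (Ideal.Quotient.mk c r) ?_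
    rw [← map_natCast (Ideal.Quotient.mk c), ← map_mul, ← map_one (Ideal.Quotient.mk c),
      Ideal.Quotient.eq]
    convert neg_mem ha using 1
    linear_combination hab
  rw [Ideal.absNorm_apply, Submodule.cardQuot_apply]
  exact Nat.coprime_card_of_isUnit_natCast hunit

theorem Ideal.finite_setOf_le {S : Type*} [CommRing S] [IsDedekindDomain S] [Module.Free ℤ S]
    [Module.Finite ℤ S] [CharZero S] {J : Ideal S} (hJ : J ≠ ⊥) : {b | J ≤ b}.Finite :=
  (Ideal.finite_setOfPred_absNorm_le (Ideal.absNorm J)).subset fun _ hb =>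
    Nat.le_of_dvd (Nat.pos_of_ne_zero (Ideal.absNorm_eq_zero_iff.not.2 hJ))
      (Ideal.absNorm_dvd_absNorm_of_le hb)

theorem Ideal.card_divisors_le_prod_count_add_one {R : Type*} [CommRing R] [IsDedekindDomain R]
    {J : Ideal R} (hJ : J ≠ ⊥) :
    Nat.card {b // J ≤ b} ≤
      ∏ P ∈ (normalizedFactors J).toFinset, ((normalizedFactors J).count P + 1) := by
  let exponents (b : {b // J ≤ b}) (P : (normalizedFactors J).toFinset) :
      Fin ((normalizedFactors J).count P.1 + 1) :=
    ⟨(normalizedFactors b.1).count P.1, Nat.lt_succ_of_le (Ideal.count_le_of_ideal_ge b.2 hJ P)⟩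
  have hinj : Function.Injective exponents := by
    intro b₁ b₂ h
    have hcount (P : Ideal R) :
        (normalizedFactors b₁.1).count P = (normalizedFactors b₂.1).count P := by
      by_cases hP : P ∈ (normalizedFactors J).toFinset
      · exact congrArg Fin.val (congrFun h ⟨P, hP⟩)
      · have hJP : (normalizedFactors J).count P = 0 :=
          Multiset.count_eq_zero.2 (mt Multiset.mem_toFinset.2 hP)
        have h₁ := Ideal.count_le_of_ideal_ge b₁.2 hJ P
        have h₂ := Ideal.count_le_of_ideal_ge b₂.2 hJ P
        omega
    have hb (b : {b // J ≤ b}) : b.1 ≠ ⊥ := ne_bot_of_le_ne_bot hJ b.2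
    apply Subtype.ext
    rw [← Ideal.prod_normalizedFactors_eq_self (hb b₁),
      ← Ideal.prod_normalizedFactors_eq_self (hb b₂), Multiset.ext.2 hcount]
  calc Nat.card {b // J ≤ b} ≤ Nat.card ((P : (normalizedFactors J).toFinset) →
        Fin ((normalizedFactors J).count P.1 + 1)) := Nat.card_le_card_of_injective _ hinj
    _ = ∏ P ∈ (normalizedFactors J).toFinset, ((normalizedFactors J).count P + 1) := by
      rw [Nat.card_pi]
      simp only [Nat.card_eq_fintype_card, Fintype.card_fin]
      exact Finset.prod_coe_sort _ (fun P => (normalizedFactors J).count P + 1)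

theorem add_one_le_mul_pow_rpow {ε N : ℝ} (hε : 0 < ε) (hN : 2 ≤ N) (e : ℕ) :
    (e : ℝ) + 1 ≤ (1 + 1 / (ε * Real.log 2)) * (N ^ e) ^ ε := by
  set c := ε * Real.log 2
  have hc : 0 < c := mul_pos hε (Real.log_pos one_lt_two)
  calc (e : ℝ) + 1 ≤ e + 1 + (c * e + 1 / c) := le_add_of_nonneg_right (by positivity)
    _ = (1 + 1 / c) * (1 + c * e) := by field_simp; ring
    _ ≤ (1 + 1 / c) * Real.exp (c * e) := by gcongr; linarith [Real.add_one_le_exp (c * e)]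
    _ = (1 + 1 / c) * (2 ^ e) ^ ε := by
        rw [← Real.rpow_natCast_mul zero_le_two, Real.rpow_def_of_pos two_pos]
        congr 2
        ring
    _ ≤ (1 + 1 / c) * (N ^ e) ^ ε := by gcongr

theorem add_one_le_pow_rpow {ε N : ℝ} (hN : 0 ≤ N) (h : 2 ≤ N ^ ε) (e : ℕ) :
    (e : ℝ) + 1 ≤ (N ^ e) ^ ε :=
  calc (e : ℝ) + 1 ≤ 2 ^ e := by exact_mod_cast Nat.lt_two_pow_self
    _ ≤ (N ^ ε) ^ e := by gcongr
    _ = (N ^ e) ^ ε := by rw [← Real.rpow_natCast_mul hN, ← Real.rpow_mul_natCast hN, mul_comm]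

theorem Ideal.exists_card_divisors_le_mul_absNorm_rpow (S : Type*) [CommRing S]
    [IsDedekindDomain S] [Module.Free ℤ S] [Module.Finite ℤ S] [CharZero S] {ε : ℝ}
    (hε : 0 < ε) : ∃ C : ℝ, 0 < C ∧ ∀ J : Ideal S, J ≠ ⊥ →
      (Nat.card {b // J ≤ b} : ℝ) ≤ C * (Ideal.absNorm J : ℝ) ^ ε := by
  set C₀ := 1 + 1 / (ε * Real.log 2)
  have hC₀ : 1 ≤ C₀ :=
    le_add_of_nonneg_right (one_div_pos.2 (mul_pos hε (Real.log_pos one_lt_two))).le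
  -- `T` contains every ideal `P` with `N(P) ^ ε < 2`; only those factors need the constant `C₀`.
  set T := (Ideal.finite_setOfPred_absNorm_le (S := S) ⌊(2 : ℝ) ^ (1 / ε)⌋₊).toFinset
  refine ⟨C₀ ^ T.card, by positivity, fun J hJ => ?_⟩
  set F := (normalizedFactors J).toFinset
  have hfactor : ∀ P ∈ F, ((normalizedFactors J).count P : ℝ) + 1 ≤
      (if P ∈ T then C₀ else 1) * ((Ideal.absNorm P : ℝ) ^ (normalizedFactors J).count P) ^ ε := by
    intro P hP
    have hPp := prime_of_normalized_factor P (Multiset.mem_toFinset.1 hP)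
    have hP2 : (2 : ℝ) ≤ Ideal.absNorm P := by
      exact_mod_cast Nat.one_lt_iff_ne_zero_and_ne_one.2
        ⟨Ideal.absNorm_eq_zero_iff.not.2 hPp.ne_zero,
          Ideal.absNorm_eq_one_iff.not.2 fun h => hPp.not_isUnit (Ideal.isUnit_iff.2 h)⟩
    split_ifs with hT
    · exact add_one_le_mul_pow_rpow hε hP2 _
    rw [one_mul]
    refine add_one_le_pow_rpow (by positivity) ?_ _
    have hlt : ⌊(2 : ℝ) ^ (1 / ε)⌋₊ < Ideal.absNorm P := by simpa [T] using hT
    have : (2 : ℝ) ^ (1 / ε) ≤ Ideal.absNorm P :=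
      (Nat.lt_floor_add_one _).le.trans (by exact_mod_cast Nat.succ_le_of_lt hlt)
    calc (2 : ℝ) = ((2 : ℝ) ^ (1 / ε)) ^ ε := by
          rw [← Real.rpow_mul zero_le_two, one_div_mul_cancel hε.ne', Real.rpow_one]
      _ ≤ _ := by gcongr
  have hnorm : (Ideal.absNorm J : ℝ) =
      ∏ P ∈ F, (Ideal.absNorm P : ℝ) ^ (normalizedFactors J).count P := by
    conv_lhs => rw [← Ideal.prod_normalizedFactors_eq_self hJ]
    rw [map_multiset_prod, Finset.prod_multiset_map_count]
    push_cast
    rfl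
  calc (Nat.card {b // J ≤ b} : ℝ) ≤ ∏ P ∈ F, (((normalizedFactors J).count P : ℝ) + 1) := by
        exact_mod_cast Ideal.card_divisors_le_prod_count_add_one hJ
    _ ≤ ∏ P ∈ F, (if P ∈ T then C₀ else 1) *
          ((Ideal.absNorm P : ℝ) ^ (normalizedFactors J).count P) ^ ε :=
        Finset.prod_le_prod (fun _ _ => by positivity) hfactor
    _ = (∏ P ∈ F ∩ T, C₀) * (Ideal.absNorm J : ℝ) ^ ε := by
        rw [Finset.prod_mul_distrib, Finset.prod_ite_mem, hnorm,
          Real.finsetProd_rpow _ _ fun _ _ => by positivity]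
    _ ≤ C₀ ^ T.card * (Ideal.absNorm J : ℝ) ^ ε := by
        rw [Finset.prod_const]
        gcongr
        exact Finset.inter_subset_right

theorem Ideal.exists_card_divisors_span_natCast_le (S : Type*) [CommRing S]
    [IsDedekindDomain S] [Module.Free ℤ S] [Module.Finite ℤ S] [CharZero S] {ξ : ℝ} (hξ : 0 < ξ) :
    ∃ C : ℝ, 0 < C ∧ ∀ k : ℕ, k ≠ 0 →
      (Nat.card {b : Ideal S // Ideal.span {(k : S)} ≤ b} : ℝ) ≤ C * (k : ℝ) ^ ξ := by
  have hd : (0 : ℝ) < Module.finrank ℤ S := by exact_mod_cast Module.finrank_pos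
  obtain ⟨C, hC, h⟩ := Ideal.exists_card_divisors_le_mul_absNorm_rpow S (div_pos hξ hd)
  refine ⟨C, hC, fun k hk => ?_⟩
  convert h (Ideal.span {(k : S)}) (by simpa [Ideal.span_singleton_eq_bot] using hk) using 2
  rw [Ideal.absNorm_span_natCast, Nat.cast_pow, ← Real.rpow_natCast_mul (Nat.cast_nonneg k),
    mul_div_cancel₀ _ hd.ne']

theorem dvd_prod_add_mul_sub_prod {A ι : Type*} [CommRing A] (s : Finset ι) (f g : ι → A)
    (a : A) : a ∣ ∏ i ∈ s, (f i + a * g i) - ∏ i ∈ s, f i := by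
  rw [← Ideal.mem_span_singleton, ← Ideal.Quotient.eq_zero_iff_mem]
  simp [Ideal.Quotient.eq_zero_iff_mem.2 (Ideal.mem_span_singleton_self a)]

namespace NumberField.RingOfIntegers

theorem natCast_dvd_norm_iff {F K : Type*} [Field F] [Field K] [Algebra F K] {k : ℕ}
    {β : 𝓞 K} :
    (k : 𝓞 F) ∣ RingOfIntegers.norm F β ↔
      ∃ z : 𝓞 F, Algebra.norm F (β : K) = (k : F) * (z : F) := by
  simp [Dvd.dvd, RingOfIntegers.ext_iff]

section RelativeNorm

variable {F K : Type*} [Field F] [NumberField F] [Field K] [NumberField K] [Algebra F K]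

theorem dvd_norm_add_mul_sub_norm [IsScalarTower ℚ F K] (a : 𝓞 F) (x y : 𝓞 K) :
    a ∣ RingOfIntegers.norm F (x + algebraMap (𝓞 F) (𝓞 K) a * y) - RingOfIntegers.norm F x := by
  rcases eq_or_ne a 0 with rfl | ha
  · simp
  have : FiniteDimensional F K := FiniteDimensional.right ℚ F K
  let Ω := AlgebraicClosure F
  let R := integralClosure ℤ Ω
  let conj (w : 𝓞 K) (σ : K →ₐ[F] Ω) : R :=
    ⟨σ w, w.isIntegral_coe.map σ.toRingHom.toIntAlgHom⟩
  let aΩ : R := ⟨algebraMap F Ω a, a.isIntegral_coe.algebraMap⟩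
  obtain ⟨r, hr⟩ := dvd_prod_add_mul_sub_prod Finset.univ (conj x) (conj y) aΩ
  set δ :=
    Algebra.norm F ((x + algebraMap (𝓞 F) (𝓞 K) a * y : 𝓞 K) : K) - Algebra.norm F (x : K)
  have hδ : algebraMap F Ω δ = algebraMap F Ω a * r := by
    have := congrArg (algebraMap R Ω) hr
    simp only [map_sub, map_prod, map_add, map_mul] at this
    simp only [δ, map_sub, Algebra.norm_eq_prod_embeddings]
    have hσ (σ : K →ₐ[F] Ω) : σ ((x + algebraMap (𝓞 F) (𝓞 K) a * y : 𝓞 K) : K)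
        = σ x + algebraMap F Ω a * σ y := by
      simp [← IsScalarTower.algebraMap_apply]
    rw [Finset.prod_congr rfl fun σ _ => hσ σ]
    exact this
  have haΩ : algebraMap F Ω a ≠ 0 := by simpa using ha
  refine ⟨⟨δ / a, ?_⟩, ?_⟩
  · refine (isIntegral_algebraMap_iff (algebraMap F Ω).injective).1 ?_
    rw [map_div₀, hδ, mul_div_cancel_left₀ _ haΩ]
    exact r.2
  · ext
    push_cast
    exact (mul_div_cancel₀ δ (RingOfIntegers.coe_ne_zero_iff.2 ha)).symm

theorem dvd_norm_of_mem_sup [IsScalarTower ℚ F K] {a : 𝓞 F} {α β : 𝓞 K}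
    (hα : a ∣ RingOfIntegers.norm F α)
    (hβ : β ∈ Ideal.span {α} ⊔ Ideal.span {algebraMap (𝓞 F) (𝓞 K) a}) :
    a ∣ RingOfIntegers.norm F β := by
  obtain ⟨_, hr, _, hu, rfl⟩ := Submodule.mem_sup.1 hβ
  obtain ⟨r, rfl⟩ := Ideal.mem_span_singleton'.1 hr
  obtain ⟨u, rfl⟩ := Ideal.mem_span_singleton'.1 hu
  have hrα : a ∣ RingOfIntegers.norm F (r * α) := by rw [map_mul]; exact hα.mul_left _
  rw [mul_comm u]
  exact (dvd_sub_left hrα).1 (dvd_norm_add_mul_sub_norm a (r * α) u)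

theorem norm_int_dvd_of_dvd_norm [IsScalarTower ℚ F K] {a : 𝓞 F} {β : 𝓞 K}
    (h : a ∣ RingOfIntegers.norm F β) : Algebra.norm ℤ a ∣ Algebra.norm ℤ β := by
  have : Algebra.norm ℤ β = Algebra.norm ℤ (RingOfIntegers.norm F β) := by
    apply Int.cast_injective (α := ℚ)
    rw [Algebra.coe_norm_int, Algebra.coe_norm_int, RingOfIntegers.coe_norm, Algebra.norm_norm]
  rw [this]
  exact map_dvd _ h

theorem pow_finrank_dvd_absNorm_sup [IsScalarTower ℚ F K] {k : ℕ} {α : 𝓞 K} (hk : k ≠ 0)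
    (hα : (k : 𝓞 F) ∣ RingOfIntegers.norm F α) :
    k ^ Module.finrank ℚ F ∣ Ideal.absNorm (Ideal.span {α} ⊔ Ideal.span {(k : 𝓞 K)}) := by
  have hk' : Ideal.span {(k : 𝓞 K)} ≠ ⊥ := by simpa [Ideal.span_singleton_eq_bot] using hk
  obtain ⟨β, hβ, c, hβc, hc⟩ := IsDedekindDomain.exists_mem_span_singleton_eq_mul_sup_eq_top
    (ne_bot_of_le_ne_bot hk' le_sup_right) hk'
  have hβk : (k : 𝓞 F) ∣ RingOfIntegers.norm F β :=
    dvd_norm_of_mem_sup hα (by rwa [map_natCast])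
  have hdvd : k ^ Module.finrank ℚ F ∣
      Ideal.absNorm (Ideal.span {α} ⊔ Ideal.span {(k : 𝓞 K)}) * Ideal.absNorm c := by
    rw [← map_mul, ← hβc, Ideal.absNorm_span_singleton, ← RingOfIntegers.rank,
      ← Ideal.absNorm_span_natCast, Ideal.absNorm_span_singleton]
    exact Int.natAbs_dvd_natAbs.2 (norm_int_dvd_of_dvd_norm hβk)
  exact (Nat.Coprime.pow_left _
    (Ideal.coprime_absNorm_of_sup_span_natCast_eq_top hc).symm).dvd_of_dvd_mul_right hdvd

end RelativeNorm

end NumberField.RingOfIntegers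

section Box

variable {ι F K : Type*} [Fintype ι] [Field F] [NumberField F] [Field K] [NumberField K]
  [Algebra F K] [IsScalarTower ℚ F K]

theorem card_box_natCast_dvd_norm_le (ω : Module.Basis ι ℤ (𝓞 K)) {k : ℕ} (hk : k ≠ 0) :
    Nat.card {v : ι → ℕ // (∀ j, 0 < v j ∧ v j ≤ k) ∧
        (k : 𝓞 F) ∣ RingOfIntegers.norm F (∑ i, (v i : ℤ) • ω i)} ≤
      Nat.card {b : Ideal (𝓞 K) // Ideal.span {(k : 𝓞 K)} ≤ b} *
        k ^ (Fintype.card ι - Module.finrank ℚ F) := by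
  set J := Ideal.span {(k : 𝓞 K)}
  have hJ : J ≠ ⊥ := by simpa [J, Ideal.span_singleton_eq_bot] using hk
  have hcardι : Fintype.card ι = Module.finrank ℚ K := by
    rw [← Module.finrank_eq_card_basis ω, RingOfIntegers.rank]
  have hdeg : Module.finrank ℚ F ≤ Fintype.card ι := by
    have : FiniteDimensional F K := FiniteDimensional.right ℚ F K
    rw [hcardι, ← Module.finrank_mul_finrank ℚ F K]
    exact Nat.le_mul_of_pos_right _ Module.finrank_pos
  set S := {v : ι → ℕ // (∀ j, 0 < v j ∧ v j ≤ k) ∧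
    (k : 𝓞 F) ∣ RingOfIntegers.norm F (∑ i, (v i : ℤ) • ω i)}
  let residue (v : S) : 𝓞 K ⧸ J := J.mkQ (∑ i, (v.1 i : ℤ) • ω i)
  have hresidue : Function.Injective residue := fun v w h =>
    Subtype.ext (ω.eq_of_sub_mem_span_natCast_s19 v.2.1 w.2.1 ((Submodule.Quotient.eq J).1 h))
  have : Finite (𝓞 K ⧸ J) := (Ideal.absNorm_ne_zero_iff J).1 (Ideal.absNorm_eq_zero_iff.not.2 hJ)
  have : Finite S := Finite.of_injective _ hresidue
  have : Finite {b // J ≤ b} := (Ideal.finite_setOf_le hJ).to_subtype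
  let gcd (v : S) : {b // J ≤ b} := ⟨Ideal.span {∑ i, (v.1 i : ℤ) • ω i} ⊔ J, le_sup_right⟩
  refine Nat.card_le_card_mul_of_card_fiber_le gcd fun b => ?_
  rcases isEmpty_or_nonempty {v // gcd v = b} with hb | ⟨⟨v₀, rfl⟩⟩
  · rw [Nat.card_of_isEmpty]
    exact Nat.zero_le _
  have hcard : Nat.card (Submodule.map J.mkQ (gcd v₀).1) * Ideal.absNorm (gcd v₀).1 =
      k ^ Fintype.card ι := by
    rw [Ideal.absNorm_apply, Submodule.cardQuot_apply,
      Submodule.card_quotient_mul_card_quotient _ _ le_sup_right, ← Submodule.cardQuot_apply,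
      ← Ideal.absNorm_apply, Ideal.absNorm_span_natCast, Module.finrank_eq_card_basis ω]
  have hmem (v : {v // gcd v = gcd v₀}) : residue v.1 ∈ Submodule.map J.mkQ (gcd v₀).1 := by
    rw [← congrArg Subtype.val v.2]
    exact Submodule.mem_map_of_mem (Submodule.mem_sup_left (Ideal.mem_span_singleton_self _))
  calc Nat.card {v // gcd v = gcd v₀} ≤ Nat.card (Submodule.map J.mkQ (gcd v₀).1) :=
        Nat.card_le_card_of_injective (fun v => ⟨residue v.1, hmem v⟩)
          fun v w h => Subtype.ext (hresidue (congrArg Subtype.val h))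
    _ ≤ k ^ (Fintype.card ι - Module.finrank ℚ F) :=
        Nat.le_pow_sub_of_mul_eq_pow hk hdeg hcard
          (RingOfIntegers.pow_finrank_dvd_absNorm_sup hk v₀.2.2)

theorem card_box_natCast_dvd_norm_lt (ω : Module.Basis ι ℤ (𝓞 K)) {i₀ : ι} (hω : ω i₀ = 1)
    {k : ℕ} (hk : 1 < k) :
    Nat.card {v : ι → ℕ // (∀ j, 0 < v j ∧ v j ≤ k) ∧
        (k : 𝓞 F) ∣ RingOfIntegers.norm F (∑ i, (v i : ℤ) • ω i)} < k ^ Fintype.card ι := by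
  classical
  set v₀ : ι → ℕ := Function.update (fun _ => k) i₀ 1
  have hv₀ : ∑ i, (v₀ i : ℤ) • ω i =
      1 + algebraMap (𝓞 F) (𝓞 K) k * ∑ i ∈ Finset.univ.erase i₀, ω i := by
    rw [← Finset.add_sum_erase _ _ (Finset.mem_univ i₀), Finset.mul_sum]
    simp only [v₀, Function.update_self, Nat.cast_one, one_smul, hω, map_natCast]
    congr 1
    refine Finset.sum_congr rfl fun i hi => ?_
    rw [Function.update_of_ne (Finset.ne_of_mem_erase hi), natCast_zsmul, nsmul_eq_mul]
  refine card_box_subtype_lt (v₀ := v₀) (fun j => ?_) fun h => hk.ne' ?_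
  · rcases eq_or_ne j i₀ with rfl | hj
    · simp [v₀]; omega
    · simp [v₀, hj]; omega
  rw [hv₀] at h
  have h1 : (k : 𝓞 F) ∣ RingOfIntegers.norm F 1 :=
    (dvd_sub_right h).1 (RingOfIntegers.dvd_norm_add_mul_sub_norm _ 1 _)
  rw [map_one] at h1
  exact Ideal.span_natCast_eq_top_iff.1 (Ideal.span_singleton_eq_top.2 (isUnit_of_dvd_one h1))

end Box

theorem relative_norm_divisibility_count_bounds_general
    (n : ℕ) (hn0 : 0 < n) (hn4 : 4 ≤ n)
    (L : Type) [Field L] [NumberField L] (hL2 : Module.finrank ℚ L = 2)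
    (K : Type) [Field K] [NumberField K] [Algebra L K] [IsScalarTower ℚ L K]
    (ωK : Module.Basis (Fin n) ℤ (𝓞 K)) (hω1 : ωK ⟨0, hn0⟩ = 1) :
    (∀ ξ : ℝ, 0 < ξ → ∃ C : ℝ, 0 < C ∧ ∀ k : ℕ, 1 ≤ k →
      ((Nat.card {v : Fin n → ℕ //
          (∀ j, 0 < v j ∧ v j ≤ k)
          ∧ ∃ z : 𝓞 L, Algebra.norm L (((∑ i, (v i : ℤ) • ωK i : 𝓞 K) : K))
              = (k : L) * (z : L)} : ℝ))
        ≤ C * (k : ℝ) ^ ((n : ℝ) - 2 + ξ))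
    ∧ (∀ k : ℕ, 1 < k →
      Nat.card {v : Fin n → ℕ //
          (∀ j, 0 < v j ∧ v j ≤ k)
          ∧ ∃ z : 𝓞 L, Algebra.norm L (((∑ i, (v i : ℤ) • ωK i : 𝓞 K) : K))
              = (k : L) * (z : L)}
        < k ^ n) := by
  simp_rw [← RingOfIntegers.natCast_dvd_norm_iff]
  refine ⟨fun ξ hξ => ?_, fun k hk => by simpa using card_box_natCast_dvd_norm_lt ωK hω1 hk⟩
  obtain ⟨C, hC, hdiv⟩ := Ideal.exists_card_divisors_span_natCast_le (𝓞 K) hξ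
  refine ⟨C, hC, fun k hk => ?_⟩
  have hk₀ : (0 : ℝ) < k := by exact_mod_cast hk
  have hbox := card_box_natCast_dvd_norm_le (F := L) ωK (k := k) (by omega)
  rw [hL2, Fintype.card_fin] at hbox
  calc _ ≤ (Nat.card {b : Ideal (𝓞 K) // Ideal.span {(k : 𝓞 K)} ≤ b} : ℝ) * (k : ℝ) ^ (n - 2) :=
        mod_cast hbox
    _ ≤ C * (k : ℝ) ^ ξ * (k : ℝ) ^ (n - 2) := by gcongr; exact hdiv k (by omega)
    _ = C * (k : ℝ) ^ ((n : ℝ) - 2 + ξ) := by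
        rw [Real.rpow_add hk₀, ← Real.rpow_natCast, Nat.cast_sub (by omega)]
        push_cast
        ring

/-- The bounds (RB) of §8 of Browning–Heath-Brown for
`R(k) = #{v ∈ ℕⁿ : 0 < v_j ≤ k, k ∣ 𝐍_{K/L}(v) in 𝔬_L}`: for every `ξ > 0` one has
`R(k) ≪_ξ k^{n−2+ξ}`, and `R(k) < kⁿ` for every `k > 1`. -/
theorem relative_norm_divisibility_count_bounds
    (n : ℕ) (hn0 : 0 < n) (hn4 : 4 ≤ n) (hneven : Even n)
    (L : Type) [Field L] [NumberField L] (hL2 : Module.finrank ℚ L = 2)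
    (K : Type) [Field K] [NumberField K] [Algebra L K] [IsScalarTower ℚ L K]
    (hKn : Module.finrank ℚ K = n)
    (ωK : Module.Basis (Fin n) ℤ (𝓞 K)) (hω1 : ωK ⟨0, hn0⟩ = 1) :
    (∀ ξ : ℝ, 0 < ξ → ∃ C : ℝ, 0 < C ∧ ∀ k : ℕ, 1 ≤ k →
      ((Nat.card {v : Fin n → ℕ //
          (∀ j, 0 < v j ∧ v j ≤ k)
          ∧ ∃ z : 𝓞 L, Algebra.norm L (((∑ i, (v i : ℤ) • ωK i : 𝓞 K) : K))
              = (k : L) * (z : L)} : ℝ))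
        ≤ C * (k : ℝ) ^ ((n : ℝ) - 2 + ξ))
    ∧ (∀ k : ℕ, 1 < k →
      Nat.card {v : Fin n → ℕ //
          (∀ j, 0 < v j ∧ v j ≤ k)
          ∧ ∃ z : 𝓞 L, Algebra.norm L (((∑ i, (v i : ℤ) • ωK i : 𝓞 K) : K))
              = (k : L) * (z : L)}
        < k ^ n) :=
  relative_norm_divisibility_count_bounds_general n hn0 hn4 L hL2 K ωK hω1
end
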